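/- arXiv:2412.15839 — 16 statements merged into one kernel-verified Lean document; each statement's English description precedes it below -/
import Mathlib

section
/- Let (X, ▷) be a shelf, i.e. a set with a binary operation satisfying a ▷ (b ▷ c) = (a ▷ b) ▷ (a ▷ c) for all a, b, c ∈ X. Let I be an index set and for all i, j ∈ I let α_{ij} : X → X be maps such that α_{ih}(a) ▷ α_{jh}(b) = α_{jh}(α_{ij}(a) ▷ b) for all a, b ∈ X and i, j, h ∈ I. Define a ▷_{ij} b := α_{ij}(a) ▷ b. Then the family (▷_{ij}) satisfies the parametric self-distributivity law a ▷_{ik} (b ▷_{jk} c) = (a ▷_{ij} b) ▷_{jk} (a ▷_{ik} c) for all a, b, c ∈ X and i, j, k ∈ I; moreover, if every left translation b ↦ a ▷ b of (X, ▷) is bijective (i.e. (X, ▷) is a rack), then every left translation b ↦ a ▷_{ij} b is bijective. -/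
/-- A shelf `(X, ▷)` together with maps `α_{ij} : X → X` satisfying
`α_{ih}(a) ▷ α_{jh}(b) = α_{jh}(α_{ij}(a) ▷ b)` yields a p-shelf via
`a ▷_{ij} b := α_{ij}(a) ▷ b`; if moreover `(X, ▷)` is a rack, the resulting
family is a p-rack. -/
theorem shelf_to_pShelf {X I : Type*} (op : X → X → X)
    (hshelf : ∀ a b c : X, op a (op b c) = op (op a b) (op a c))
    (α : I → I → X → X)
    (hcond : ∀ (a b : X) (i j h : I), op (α i h a) (α j h b) = α j h (op (α i j a) b)) :
    (∀ (a b c : X) (i j k : I),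
        op (α i k a) (op (α j k b) c)
          = op (α j k (op (α i j a) b)) (op (α i k a) c))
      ∧ ((∀ a : X, Function.Bijective (op a)) →
          ∀ (a : X) (i j : I), Function.Bijective fun b => op (α i j a) b) :=
  ⟨fun a b c i j k => by rw [hshelf, hcond], fun hrack a i j => hrack (α i j a)⟩
end

section
/- Let X be a nonempty set, I an index set, and for each pair (i,j) ∈ I × I let ▷_{ij} : X × X → X be a binary operation. Define R^{ij} : X × X → X × X by R^{ij}(b, a) = (b, b ▷_{ij} a). Then R^{ij} is a solution of the parametric set-theoretic Yang–Baxter equation (necessarily left non-degenerate, since its first component map is the identity) if and only if (X, ▷_{ij}) is a p-shelf. Moreover, R^{ij} is bijective and non-degenerate (i.e. the maps a ↦ b ▷_{ij} a are bijective) if and only if (X, ▷_{ij}) is a p-rack. -/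
namespace Stmt1

variable {X P : Type*}

/-- `R_{12}` acting on the first two factors of `X × X × X`, where
`R^{ij}(b,a) = (σ^{ij}_a(b), τ^{ij}_b(a))`. -/
def R12 (σ τ : P → P → X → X → X) (i j : P) : X × X × X → X × X × X :=
  fun p => (σ i j p.2.1 p.1, τ i j p.1 p.2.1, p.2.2)

def R13 (σ τ : P → P → X → X → X) (i j : P) : X × X × X → X × X × X :=
  fun p => (σ i j p.2.2 p.1, p.2.1, τ i j p.1 p.2.2)

def R23 (σ τ : P → P → X → X → X) (i j : P) : X × X × X → X × X × X :=
  fun p => (p.1, σ i j p.2.2 p.2.1, τ i j p.2.1 p.2.2)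

/-- The parametric set-theoretic Yang–Baxter equation. -/
def IsYB (σ τ : P → P → X → X → X) : Prop :=
  ∀ i j k : P,
    R12 σ τ i j ∘ R13 σ τ i k ∘ R23 σ τ j k
      = R23 σ τ j k ∘ R13 σ τ i k ∘ R12 σ τ i j

/-- The map `R^{ij} : X × X → X × X`, `R^{ij}(b, a) = (σ^{ij}_a(b), τ^{ij}_b(a))`. -/
def Rm (σ τ : P → P → X → X → X) (i j : P) : X × X → X × X :=
  fun p => (σ i j p.2 p.1, τ i j p.1 p.2)

/-- The parametric self-distributivity law defining p-shelves,
with `d i j a b = a ▷_{ij} b`. -/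
def IsPShelf (d : P → P → X → X → X) : Prop :=
  ∀ (i j k : P) (a b c : X), d i k a (d j k b c) = d j k (d i j a b) (d i k a c)

theorem bijective_rm_id_of_bijective {d : P → P → X → X → X} {i j : P}
    (hd : ∀ b, Function.Bijective (d i j b)) :
    Function.Bijective (Rm (fun _ _ _ b => b) d i j) :=
  (Equiv.prodShear (Equiv.refl X) fun b => Equiv.ofBijective (d i j b) (hd b)).bijective

/-- With `σ` trivial, both sides of the Yang–Baxter equation fix the first two entries of
`(a, b, c)`, and their third entries are the two sides of the p-shelf law. -/
theorem isYB_id_iff_isPShelf (d : P → P → X → X → X) :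
    IsYB (fun _ _ _ b => b) d ↔ IsPShelf d := by
  simp only [IsYB, IsPShelf, funext_iff, Prod.forall, Function.comp_apply, R12, R13, R23,
    Prod.mk.injEq, true_and]

theorem pShelf_solution_iff_general {X I : Type*} (d : I → I → X → X → X) :
    (IsYB (fun _ _ _ b => b) d ↔ IsPShelf d)
    ∧ ((IsYB (fun _ _ _ b => b) d
          ∧ (∀ i j : I, Function.Bijective (Rm (fun _ _ _ b => b) d i j))
          ∧ (∀ (i j : I) (b : X), Function.Bijective (d i j b)))
        ↔ (IsPShelf d ∧ ∀ (i j : I) (b : X), Function.Bijective (d i j b))) := by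
  refine ⟨isYB_id_iff_isPShelf d, ?_, ?_⟩
  · rintro ⟨hyb, -, hd⟩
    exact ⟨(isYB_id_iff_isPShelf d).1 hyb, hd⟩
  · rintro ⟨hshelf, hd⟩
    exact ⟨(isYB_id_iff_isPShelf d).2 hshelf, fun i j => bijective_rm_id_of_bijective (hd i j), hd⟩

/-- `R^{ij}(b,a) = (b, b ▷_{ij} a)` is a solution of the parametric
set-theoretic Yang–Baxter equation iff `(X, ▷_{ij})` is a p-shelf; and it is a
bijective, non-degenerate solution iff `(X, ▷_{ij})` is a p-rack. -/
theorem pShelf_solution_iff {X I : Type*} [Nonempty X] (d : I → I → X → X → X) :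
    (IsYB (fun _ _ _ b => b) d ↔ IsPShelf d)
    ∧ ((IsYB (fun _ _ _ b => b) d
          ∧ (∀ i j : I, Function.Bijective (Rm (fun _ _ _ b => b) d i j))
          ∧ (∀ (i j : I) (b : X), Function.Bijective (d i j b)))
        ↔ (IsPShelf d ∧ ∀ (i j : I) (b : X), Function.Bijective (d i j b))) :=
  pShelf_solution_iff_general d

end Stmt1
end

section
/- Let (X, ▷_{ij}) be a p-shelf indexed by pairs of elements of a set Y, let μ : Y → Y be an involutive map (write z̄ = μ(z)), let R^{ij}(b, a) = (b, b ▷_{ij} a) be the associated p-shelf solution of the parametric Yang–Baxter equation, and for each z ∈ Y let K^{z} : X → X, a ↦ κ^{z}(a). Then K^{z} is a parametric reflection for R if and only if, for all a, b ∈ X and z_i, z_j ∈ Y: (i) (κ^{z_i}(b ▷_{z̄_j z̄_i} a)) ▷_{z_i z_j} κ^{z_j}(b) = κ^{z_j}((κ^{z_i}(b ▷_{z̄_j z̄_i} a)) ▷_{z_i z̄_j} b), and (ii) κ^{z_i}((κ^{z_j}(b)) ▷_{z_j z̄_i} a) = κ^{z_i}(b ▷_{z̄_j z̄_i} a). -/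
namespace Stmt3

variable {X P : Type*}

/-- The map `R^{ij} : X × X → X × X`, `R^{ij}(b, a) = (σ^{ij}_a(b), τ^{ij}_b(a))`. -/
def Rm (σ τ : P → P → X → X → X) (i j : P) : X × X → X × X :=
  fun p => (σ i j p.2 p.1, τ i j p.1 p.2)

/-- `R_{21}^{ij} = π ∘ R^{ij} ∘ π` where `π` is the flip. -/
def R21 (σ τ : P → P → X → X → X) (i j : P) : X × X → X × X :=
  Prod.swap ∘ Rm σ τ i j ∘ Prod.swap

/-- `K_1^{z}(a,b) = (κ^{z}(a), b)`. -/
def K1 (κ : P → X → X) (z : P) : X × X → X × X := fun p => (κ z p.1, p.2)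

/-- `K_2^{z}(a,b) = (a, κ^{z}(b))`. -/
def K2 (κ : P → X → X) (z : P) : X × X → X × X := fun p => (p.1, κ z p.2)

/-- The parametric set-theoretic reflection equation for `K^z` with respect to
the solution `R` and the involution `μ`. -/
def IsReflection (σ τ : P → P → X → X → X) (μ : P → P) (κ : P → X → X) : Prop :=
  ∀ z1 z2 : P,
    Rm σ τ z1 z2 ∘ K1 κ z1 ∘ R21 σ τ z2 (μ z1) ∘ K2 κ z2
      = K2 κ z2 ∘ Rm σ τ z1 (μ z2) ∘ K1 κ z1 ∘ R21 σ τ (μ z2) (μ z1)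

/-- The parametric self-distributivity law defining p-shelves,
with `d i j a b = a ▷_{ij} b`. -/
def IsPShelf (d : P → P → X → X → X) : Prop :=
  ∀ (i j k : P) (a b c : X), d i k a (d j k b c) = d j k (d i j a b) (d i k a c)

@[simp]
theorem Rm_shelf_apply (d : P → P → X → X → X) (i j : P) (x y : X) :
    Rm (fun _ _ _ b => b) d i j (x, y) = (x, d i j x y) :=
  rfl

@[simp]
theorem R21_shelf_apply (d : P → P → X → X → X) (i j : P) (x y : X) :
    R21 (fun _ _ _ b => b) d i j (x, y) = (d i j y x, y) :=
  rfl

/-- Evaluating both sides of the reflection equation at `(a, b)`: the first components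
give condition (ii), and the second components give condition (i) once (ii) is known. -/
theorem isReflection_shelf_iff (d : P → P → X → X → X) (μ : P → P) (κ : P → X → X) :
    IsReflection (fun _ _ _ b => b) d μ κ ↔
      ∀ (z1 z2 : P) (a b : X),
        κ z1 (d z2 (μ z1) (κ z2 b) a) = κ z1 (d (μ z2) (μ z1) b a)
          ∧ d z1 z2 (κ z1 (d z2 (μ z1) (κ z2 b) a)) (κ z2 b)
              = κ z2 (d z1 (μ z2) (κ z1 (d (μ z2) (μ z1) b a)) b) := by
  simp only [IsReflection, funext_iff, Prod.forall, Function.comp_apply, K1, K2,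
    R21_shelf_apply, Rm_shelf_apply, Prod.mk.injEq]

theorem pShelf_reflection_iff_general {X Y : Type*} (d : Y → Y → X → X → X)
    (μ : Y → Y) (κ : Y → X → X) :
    IsReflection (fun _ _ (_ : X) b => b) d μ κ ↔
      ∀ (a b : X) (zi zj : Y),
        (d zi zj (κ zi (d (μ zj) (μ zi) b a)) (κ zj b)
            = κ zj (d zi (μ zj) (κ zi (d (μ zj) (μ zi) b a)) b))
        ∧ (κ zi (d zj (μ zi) (κ zj b) a) = κ zi (d (μ zj) (μ zi) b a)) := by
  rw [isReflection_shelf_iff]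
  constructor
  · intro h a b zi zj
    obtain ⟨hii, hi⟩ := h zi zj a b
    exact ⟨hii ▸ hi, hii⟩
  · intro h zi zj a b
    obtain ⟨hi, hii⟩ := h a b zi zj
    exact ⟨hii, hii ▸ hi⟩

/-- for a p-shelf solution `R^{ij}(b,a) = (b, b ▷_{ij} a)`,
a family of maps `K^z = κ^z` is a parametric reflection iff conditions (i)
and (ii) hold. -/
theorem pShelf_reflection_iff {X Y : Type*} (d : Y → Y → X → X → X)
    (hshelf : IsPShelf d) (μ : Y → Y) (hμ : ∀ z, μ (μ z) = z) (κ : Y → X → X) :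
    IsReflection (fun _ _ (_ : X) b => b) d μ κ ↔
      ∀ (a b : X) (zi zj : Y),
        (d zi zj (κ zi (d (μ zj) (μ zi) b a)) (κ zj b)
            = κ zj (d zi (μ zj) (κ zi (d (μ zj) (μ zi) b a)) b))
        ∧ (κ zi (d zj (μ zi) (κ zj b) a) = κ zi (d (μ zj) (μ zi) b a)) :=
  pShelf_reflection_iff_general d μ κ

end Stmt3
end

section
/- Let (X, ▷_{ij}) be a p-shelf indexed by pairs of elements of a set Y, let μ : Y → Y be an involutive map (write z̄ = μ(z)), let R^{ij}(b, a) = (b, b ▷_{ij} a) be the associated p-shelf solution of the parametric Yang–Baxter equation, and for each z ∈ Y let K^{z} : X → X, a ↦ κ^{z}(a), be a bijective map. Then K^{z} is a parametric reflection for R if and only if, for all a, b ∈ X and z_i, z_j ∈ Y: (i) (b ▷_{z̄_j z_i} a) ▷_{z_i z_j} κ^{z_j}(b) = κ^{z_j}((b ▷_{z̄_j z_i} a) ▷_{z_i z̄_j} b), and (ii) κ^{z_i}(a) ▷_{z_i z_j} b = a ▷_{z̄_i z_j} b. -/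
/-!
Evaluated at `(a, b)`, the first component of the reflection equation reads
`κ^{z₁}(κ^{z₂}(b) ▷_{z₂ z̄₁} a) = κ^{z₁}(b ▷_{z̄₂ z̄₁} a)`; since `κ` is injective and `μ` is
surjective this is exactly (ii). Using (ii) to absorb every `κ` standing on the left of a `▷`,
the second component becomes (i) with `z_i = z̄₁`.
-/

namespace Stmt4

variable {X P : Type*}

/-- The map `R^{ij} : X × X → X × X`, `R^{ij}(b, a) = (σ^{ij}_a(b), τ^{ij}_b(a))`. -/
def Rm (σ τ : P → P → X → X → X) (i j : P) : X × X → X × X :=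
  fun p => (σ i j p.2 p.1, τ i j p.1 p.2)

/-- `R_{21}^{ij} = π ∘ R^{ij} ∘ π` where `π` is the flip. -/
def R21 (σ τ : P → P → X → X → X) (i j : P) : X × X → X × X :=
  Prod.swap ∘ Rm σ τ i j ∘ Prod.swap

/-- `K_1^{z}(a,b) = (κ^{z}(a), b)`. -/
def K1 (κ : P → X → X) (z : P) : X × X → X × X := fun p => (κ z p.1, p.2)

/-- `K_2^{z}(a,b) = (a, κ^{z}(b))`. -/
def K2 (κ : P → X → X) (z : P) : X × X → X × X := fun p => (p.1, κ z p.2)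

/-- The parametric set-theoretic reflection equation for `K^z` with respect to
the solution `R` and the involution `μ`. -/
def IsReflection (σ τ : P → P → X → X → X) (μ : P → P) (κ : P → X → X) : Prop :=
  ∀ z1 z2 : P,
    Rm σ τ z1 z2 ∘ K1 κ z1 ∘ R21 σ τ z2 (μ z1) ∘ K2 κ z2
      = K2 κ z2 ∘ Rm σ τ z1 (μ z2) ∘ K1 κ z1 ∘ R21 σ τ (μ z2) (μ z1)

/-- The parametric self-distributivity law defining p-shelves,
with `d i j a b = a ▷_{ij} b`. -/
def IsPShelf (d : P → P → X → X → X) : Prop :=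
  ∀ (i j k : P) (a b c : X), d i k a (d j k b c) = d j k (d i j a b) (d i k a c)

section

variable {X Y : Type*} {d : Y → Y → X → X → X} {μ : Y → Y} {κ : Y → X → X}

theorem isReflection_shelfSolution_iff :
    IsReflection (fun _ _ (_ : X) b => b) d μ κ ↔
      ∀ (z1 z2 : Y) (a b : X),
        κ z1 (d z2 (μ z1) (κ z2 b) a) = κ z1 (d (μ z2) (μ z1) b a) ∧
        d z1 z2 (κ z1 (d z2 (μ z1) (κ z2 b) a)) (κ z2 b)
          = κ z2 (d z1 (μ z2) (κ z1 (d (μ z2) (μ z1) b a)) b) := by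
  simp only [IsReflection, funext_iff, Prod.forall, Function.comp_apply, Rm, R21, K1, K2,
    Prod.swap_prod_mk, Prod.mk.injEq]

theorem reflection_fst_iff (hμ : Function.Surjective μ) (hκ : ∀ z, Function.Injective (κ z)) :
    (∀ (z1 z2 : Y) (a b : X), κ z1 (d z2 (μ z1) (κ z2 b) a) = κ z1 (d (μ z2) (μ z1) b a)) ↔
      ∀ (a b : X) (zi zj : Y), d zi zj (κ zi a) b = d (μ zi) zj a b := by
  simp only [(hκ _).eq_iff]
  constructor
  · intro h a b zi zj
    obtain ⟨z1, rfl⟩ := hμ zj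
    exact h z1 zi b a
  · exact fun h z1 z2 a b => h b a z2 (μ z1)

theorem reflection_snd_iff (hμ : Function.Surjective μ)
    (habsorb : ∀ (a b : X) (zi zj : Y), d zi zj (κ zi a) b = d (μ zi) zj a b) :
    (∀ (z1 z2 : Y) (a b : X),
        d z1 z2 (κ z1 (d z2 (μ z1) (κ z2 b) a)) (κ z2 b)
          = κ z2 (d z1 (μ z2) (κ z1 (d (μ z2) (μ z1) b a)) b)) ↔
      ∀ (a b : X) (zi zj : Y),
        d zi zj (d (μ zj) zi b a) (κ zj b) = κ zj (d zi (μ zj) (d (μ zj) zi b a) b) := by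
  simp only [habsorb]
  constructor
  · intro h a b zi zj
    obtain ⟨z1, rfl⟩ := hμ zi
    exact h z1 zj a b
  · exact fun h z1 z2 a b => h a b (μ z1) z2

end

theorem pShelf_bijective_reflection_iff_general {X Y : Type*} (d : Y → Y → X → X → X)
    (μ : Y → Y) (hμ : ∀ z, μ (μ z) = z)
    (κ : Y → X → X) (hκ : ∀ z, Function.Bijective (κ z)) :
    IsReflection (fun _ _ (_ : X) b => b) d μ κ ↔
      ∀ (a b : X) (zi zj : Y),
        (d zi zj (d (μ zj) zi b a) (κ zj b)
            = κ zj (d zi (μ zj) (d (μ zj) zi b a) b))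
        ∧ (d zi zj (κ zi a) b = d (μ zi) zj a b) := by
  have hμsurj : Function.Surjective μ := Function.Involutive.surjective hμ
  simp only [isReflection_shelfSolution_iff, forall_and]
  rw [reflection_fst_iff hμsurj fun z => (hκ z).injective, and_comm]
  exact and_congr_left (reflection_snd_iff hμsurj)

/-- for a p-shelf solution `R^{ij}(b,a) = (b, b ▷_{ij} a)` and a
bijective family `K^z = κ^z`, `K` is a parametric reflection iff conditions
(i) and (ii) hold. -/
theorem pShelf_bijective_reflection_iff {X Y : Type*} (d : Y → Y → X → X → X)
    (hshelf : IsPShelf d) (μ : Y → Y) (hμ : ∀ z, μ (μ z) = z)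
    (κ : Y → X → X) (hκ : ∀ z, Function.Bijective (κ z)) :
    IsReflection (fun _ _ (_ : X) b => b) d μ κ ↔
      ∀ (a b : X) (zi zj : Y),
        (d zi zj (d (μ zj) zi b a) (κ zj b)
            = κ zj (d zi (μ zj) (d (μ zj) zi b a) b))
        ∧ (d zi zj (κ zi a) b = d (μ zi) zj a b) :=
  pShelf_bijective_reflection_iff_general d μ hμ κ hκ

end Stmt4
end

section
/- Let (X, ▷_{ij}) be a p-rack indexed by pairs of elements of a set Y, let μ : Y → Y be an involutive map (write z̄ = μ(z)), let R^{ij}(b, a) = (b, b ▷_{ij} a) be the associated p-rack solution of the parametric Yang–Baxter equation, and for each z ∈ Y let K^{z} : X → X, a ↦ κ^{z}(a), be a bijective map. Then K^{z} is a parametric reflection for R if and only if, for all a, b ∈ X and z_i, z_j ∈ Y: (i) a ▷_{z_i z_j} κ^{z_j}(b) = κ^{z_j}(a ▷_{z_i z̄_j} b), and (ii) κ^{z_i}(a) ▷_{z_i z_j} b = a ▷_{z̄_i z_j} b. -/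
namespace Stmt5

variable {X P : Type*}

/-- The map `R^{ij} : X × X → X × X`, `R^{ij}(b, a) = (σ^{ij}_a(b), τ^{ij}_b(a))`. -/
def Rm (σ τ : P → P → X → X → X) (i j : P) : X × X → X × X :=
  fun p => (σ i j p.2 p.1, τ i j p.1 p.2)

/-- `R_{21}^{ij} = π ∘ R^{ij} ∘ π` where `π` is the flip. -/
def R21 (σ τ : P → P → X → X → X) (i j : P) : X × X → X × X :=
  Prod.swap ∘ Rm σ τ i j ∘ Prod.swap

/-- `K_1^{z}(a,b) = (κ^{z}(a), b)`. -/
def K1 (κ : P → X → X) (z : P) : X × X → X × X := fun p => (κ z p.1, p.2)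

/-- `K_2^{z}(a,b) = (a, κ^{z}(b))`. -/
def K2 (κ : P → X → X) (z : P) : X × X → X × X := fun p => (p.1, κ z p.2)

/-- The parametric set-theoretic reflection equation for `K^z` with respect to
the solution `R` and the involution `μ`. -/
def IsReflection (σ τ : P → P → X → X → X) (μ : P → P) (κ : P → X → X) : Prop :=
  ∀ z1 z2 : P,
    Rm σ τ z1 z2 ∘ K1 κ z1 ∘ R21 σ τ z2 (μ z1) ∘ K2 κ z2
      = K2 κ z2 ∘ Rm σ τ z1 (μ z2) ∘ K1 κ z1 ∘ R21 σ τ (μ z2) (μ z1)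

/-- The parametric self-distributivity law defining p-shelves,
with `d i j a b = a ▷_{ij} b`. -/
def IsPShelf (d : P → P → X → X → X) : Prop :=
  ∀ (i j k : P) (a b c : X), d i k a (d j k b c) = d j k (d i j a b) (d i k a c)

/-!
On the p-rack solution `R^{ij}(b, a) = (b, b ▷_{ij} a)` both sides of the reflection equation,
evaluated at `(a, b)`, are computed in closed form, so the equation splits into two equations
of components. Cancelling the injective `κ^{z₁}`, the first one is (ii). Using (ii) to absorb
the `κ` in the first argument of `▷`, the second one becomes (i) at the point
`c = b ▷_{z̄₂ z̄₁} a`, which ranges over all of `X` because left translations are surjective.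
-/

section

variable {X Y : Type*} {d : Y → Y → X → X → X} {μ : Y → Y} {κ : Y → X → X}

theorem isReflection_rack_iff :
    IsReflection (fun _ _ (_ : X) b => b) d μ κ ↔
      ∀ (z₁ z₂ : Y) (a b : X),
        κ z₁ (d z₂ (μ z₁) (κ z₂ b) a) = κ z₁ (d (μ z₂) (μ z₁) b a) ∧
          d z₁ z₂ (κ z₁ (d z₂ (μ z₁) (κ z₂ b) a)) (κ z₂ b)
            = κ z₂ (d z₁ (μ z₂) (κ z₁ (d (μ z₂) (μ z₁) b a)) b) := by
  simp only [IsReflection, funext_iff, Prod.forall, Prod.ext_iff, Function.comp_apply,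
    Rm, R21, K1, K2, Prod.fst_swap, Prod.snd_swap]

theorem reflection_fst_iff (hμ : Function.Involutive μ) (hκ : ∀ z, Function.Injective (κ z)) :
    (∀ (z₁ z₂ : Y) (a b : X), κ z₁ (d z₂ (μ z₁) (κ z₂ b) a) = κ z₁ (d (μ z₂) (μ z₁) b a)) ↔
      ∀ (a b : X) (zi zj : Y), d zi zj (κ zi a) b = d (μ zi) zj a b := by
  simp only [(hκ _).eq_iff]
  constructor
  · intro h a b zi zj
    simpa only [hμ zj] using h (μ zj) zi b a
  · intro h z₁ z₂ a b
    exact h b a z₂ (μ z₁)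

theorem reflection_snd_iff (hμ : Function.Involutive μ)
    (hsurj : ∀ (i j : Y) (a : X), Function.Surjective (d i j a))
    (hii : ∀ (a b : X) (zi zj : Y), d zi zj (κ zi a) b = d (μ zi) zj a b) :
    (∀ (z₁ z₂ : Y) (a b : X),
        d z₁ z₂ (κ z₁ (d z₂ (μ z₁) (κ z₂ b) a)) (κ z₂ b)
          = κ z₂ (d z₁ (μ z₂) (κ z₁ (d (μ z₂) (μ z₁) b a)) b)) ↔
      ∀ (a b : X) (zi zj : Y), d zi zj a (κ zj b) = κ zj (d zi (μ zj) a b) := by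
  simp only [hii]
  constructor
  · intro h a b zi zj
    obtain ⟨c, rfl⟩ := hsurj (μ zj) zi b a
    simpa only [hμ zi] using h (μ zi) zj c b
  · intro h z₁ z₂ a b
    exact h _ b (μ z₁) z₂

end

theorem pRack_bijective_reflection_iff_general {X Y : Type*} (d : Y → Y → X → X → X)
    (hrack : ∀ (i j : Y) (a : X), Function.Bijective (d i j a))
    (μ : Y → Y) (hμ : ∀ z, μ (μ z) = z)
    (κ : Y → X → X) (hκ : ∀ z, Function.Bijective (κ z)) :
    IsReflection (fun _ _ (_ : X) b => b) d μ κ ↔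
      ∀ (a b : X) (zi zj : Y),
        (d zi zj a (κ zj b) = κ zj (d zi (μ zj) a b))
        ∧ (d zi zj (κ zi a) b = d (μ zi) zj a b) := by
  simp only [isReflection_rack_iff, forall_and]
  rw [reflection_fst_iff hμ fun z => (hκ z).1, and_comm (a := ∀ _ _ _ _, _ = κ _ _)]
  exact and_congr_right fun hii => reflection_snd_iff hμ (fun i j a => (hrack i j a).2) hii

/-- for a p-rack solution `R^{ij}(b,a) = (b, b ▷_{ij} a)` and a
bijective family `K^z = κ^z`, `K` is a parametric reflection iff conditions
(i) and (ii) hold. -/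
theorem pRack_bijective_reflection_iff {X Y : Type*} (d : Y → Y → X → X → X)
    (hshelf : IsPShelf d) (hrack : ∀ (i j : Y) (a : X), Function.Bijective (d i j a))
    (μ : Y → Y) (hμ : ∀ z, μ (μ z) = z)
    (κ : Y → X → X) (hκ : ∀ z, Function.Bijective (κ z)) :
    IsReflection (fun _ _ (_ : X) b => b) d μ κ ↔
      ∀ (a b : X) (zi zj : Y),
        (d zi zj a (κ zj b) = κ zj (d zi (μ zj) a b))
        ∧ (d zi zj (κ zi a) b = d (μ zi) zj a b) :=
  pRack_bijective_reflection_iff_general d hrack μ hμ κ hκ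

end Stmt5
end

section
/- Let (X, ▷) be a shelf, I an index set with an involutive map i ↦ ī, and for all i, j ∈ I let α_{ij} : X → X be bijective maps satisfying α_{ih}(a) ▷ α_{jh}(b) = α_{jh}(α_{ij}(a) ▷ b) for all a, b ∈ X and i, j, h ∈ I; let (X, ▷_{ij}) be the p-shelf with a ▷_{ij} b := α_{ij}(a) ▷ b and R^{ij}(b,a) = (b, b ▷_{ij} a) the associated solution. Let t_i, κ_i : X → X be bijective maps with κ_i = t_i ∘ α_{īi} for all i ∈ I. Then the maps K_i : X → X, a ↦ κ_i(a), form a bijective parametric reflection for R (with respect to the involution i ↦ ī) if and only if, for all a, b ∈ X and i, j ∈ I: (i) t_i((b ▷ a) ▷ b) = (b ▷ a) ▷ t_i(b), and (ii) α_{īj}(α_{īi}^{-1}(a)) ▷ b = α_{ij}(t_i(a)) ▷ b. -/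
namespace Stmt6

variable {X P : Type*}

/-- The map `R^{ij} : X × X → X × X`, `R^{ij}(b, a) = (σ^{ij}_a(b), τ^{ij}_b(a))`. -/
def Rm (σ τ : P → P → X → X → X) (i j : P) : X × X → X × X :=
  fun p => (σ i j p.2 p.1, τ i j p.1 p.2)

/-- `R_{21}^{ij} = π ∘ R^{ij} ∘ π` where `π` is the flip. -/
def R21 (σ τ : P → P → X → X → X) (i j : P) : X × X → X × X :=
  Prod.swap ∘ Rm σ τ i j ∘ Prod.swap

/-- `K_1^{z}(a,b) = (κ^{z}(a), b)`. -/
def K1 (κ : P → X → X) (z : P) : X × X → X × X := fun p => (κ z p.1, p.2)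

/-- `K_2^{z}(a,b) = (a, κ^{z}(b))`. -/
def K2 (κ : P → X → X) (z : P) : X × X → X × X := fun p => (p.1, κ z p.2)

/-- The parametric set-theoretic reflection equation for `K^z` with respect to
the solution `R` and the involution `μ`. -/
def IsReflection (σ τ : P → P → X → X → X) (μ : P → P) (κ : P → X → X) : Prop :=
  ∀ z1 z2 : P,
    Rm σ τ z1 z2 ∘ K1 κ z1 ∘ R21 σ τ z2 (μ z1) ∘ K2 κ z2
      = K2 κ z2 ∘ Rm σ τ z1 (μ z2) ∘ K1 κ z1 ∘ R21 σ τ (μ z2) (μ z1)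

/-- The parametric self-distributivity law defining p-shelves,
with `d i j a b = a ▷_{ij} b`. -/
def IsPShelf (d : P → P → X → X → X) : Prop :=
  ∀ (i j k : P) (a b c : X), d i k a (d j k b c) = d j k (d i j a b) (d i k a c)

/-! For the derived solution `R^{ij}(b,a) = (b, b ▷_{ij} a)` the reflection equation at `(a, b)`
compares two pairs. Since `κ_i` is injective, the first components agree iff
`κ_j(b) ▷_{jī} a = b ▷_{j̄ī} a`, and reindexing through the involution and the bijections `α`
turns this into (ii). Granting (ii), both second components collapse via the compatibility of
`α` with `▷` to the two sides of (i), evaluated at `α_{j̄j}(b)` and `α_{j̄j}(b) ▷ α_{īj}(a)`;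
as `α_{j̄j}` and `α_{īj}` are onto, this is (i) for all arguments. -/

section Derived

variable {I : Type*}

theorem isReflection_iff_forall_apply (d : I → I → X → X → X) (μ : I → I) (κ : I → X → X) :
    IsReflection (fun _ _ (_ : X) b => b) d μ κ ↔ ∀ i j a b,
      κ i (d j (μ i) (κ j b) a) = κ i (d (μ j) (μ i) b a) ∧
        d i j (κ i (d j (μ i) (κ j b) a)) (κ j b)
          = κ j (d i (μ j) (κ i (d (μ j) (μ i) b a)) b) := by
  simp only [IsReflection, funext_iff, Prod.forall, Rm, R21, K1, K2, Function.comp_apply,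
    Prod.swap_prod_mk, Prod.mk.injEq]

theorem isReflection_iff_of_injective {d : I → I → X → X → X} {μ : I → I} {κ : I → X → X}
    (hκ : ∀ i, (κ i).Injective) :
    IsReflection (fun _ _ (_ : X) b => b) d μ κ ↔ ∀ i j a b,
      d j (μ i) (κ j b) a = d (μ j) (μ i) b a ∧
        d i j (κ i (d (μ j) (μ i) b a)) (κ j b)
          = κ j (d i (μ j) (κ i (d (μ j) (μ i) b a)) b) := by
  rw [isReflection_iff_forall_apply]
  refine forall₄_congr fun i j a b => ⟨fun ⟨h₁, h₂⟩ => ?_, fun ⟨h₁, h₂⟩ => ?_⟩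
  · rw [hκ i h₁] at h₂
    exact ⟨hκ i h₁, h₂⟩
  · rw [h₁]
    exact ⟨rfl, h₂⟩

end Derived

section TwistedShelf

variable {I : Type*} {op : X → X → X} {α : I → I → X ≃ X} {inv : I → I} {t : I → X → X}

theorem forall_twist_fst_iff (hinv : Function.Involutive inv) :
    (∀ i j a b, op (α j (inv i) (t j (α (inv j) j b))) a = op (α (inv j) (inv i) b) a) ↔
      ∀ (a b : X) (i j : I), op (α (inv i) j ((α (inv i) i).symm a)) b = op (α i j (t i a)) b := by
  refine ⟨fun h a b i j => ?_, fun h i j a b => ?_⟩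
  · simpa [hinv j] using (h (inv j) i b ((α (inv i) i).symm a)).symm
  · simpa using (h (α (inv j) j b) a j (inv i)).symm

variable
    (hcond : ∀ (a b : X) (i j h : I), op (α i h a) (α j h b) = α j h (op (α i j a) b))
    (hii : ∀ (a b : X) (i j : I), op (α (inv i) j ((α (inv i) i).symm a)) b = op (α i j (t i a)) b)
include hii

theorem op_twist_apply (i j : I) (c y : X) :
    op (α i j (t i (α (inv i) i c))) y = op (α (inv i) j c) y := by
  simpa using (hii (α (inv i) i c) y i j).symm

include hcond

theorem twist_snd_iff (i j : I) (a b : X) :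
    op (α i j (t i (α (inv i) i (op (α (inv j) (inv i) b) a)))) (t j (α (inv j) j b))
        = t j (α (inv j) j
            (op (α i (inv j) (t i (α (inv i) i (op (α (inv j) (inv i) b) a)))) b)) ↔
      t j (op (op (α (inv j) j b) (α (inv i) j a)) (α (inv j) j b))
        = op (op (α (inv j) j b) (α (inv i) j a)) (t j (α (inv j) j b)) := by
  rw [op_twist_apply hii, op_twist_apply hii, ← hcond _ b (inv i) (inv j) j,
    ← hcond b a (inv j) (inv i) j]
  exact eq_comm

theorem forall_twist_snd_iff :
    (∀ i j a b,
      op (α i j (t i (α (inv i) i (op (α (inv j) (inv i) b) a)))) (t j (α (inv j) j b))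
        = t j (α (inv j) j
            (op (α i (inv j) (t i (α (inv i) i (op (α (inv j) (inv i) b) a)))) b))) ↔
      ∀ (a b : X) (i : I), t i (op (op b a) b) = op (op b a) (t i b) := by
  refine ⟨fun h a b j => ?_, fun h i j a b => (twist_snd_iff hcond hii i j a b).2 (h _ _ j)⟩
  simpa using (twist_snd_iff hcond hii j j ((α (inv j) j).symm a) ((α (inv j) j).symm b)).1
    (h j j _ _)

end TwistedShelf

theorem pShelf_twisted_reflection_iff_general {X I : Type*} (op : X → X → X)
    (inv : I → I) (hinv : ∀ i, inv (inv i) = i)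
    (α : I → I → X ≃ X)
    (hcond : ∀ (a b : X) (i j h : I), op (α i h a) (α j h b) = α j h (op (α i j a) b))
    (t : I → X → X) (ht : ∀ i, Function.Bijective (t i)) :
    IsReflection (fun _ _ (_ : X) b => b) (fun i j a b => op (α i j a) b) inv
        (fun i a => t i (α (inv i) i a))
      ↔ ∀ (a b : X) (i j : I),
          (t i (op (op b a) b) = op (op b a) (t i b))
          ∧ (op (α (inv i) j ((α (inv i) i).symm a)) b = op (α i j (t i a)) b) := by
  have hκ : ∀ i, (fun a => t i (α (inv i) i a)).Injective := fun i =>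
    (ht i).injective.comp (α (inv i) i).injective
  rw [isReflection_iff_of_injective hκ]
  simp only [forall_and]
  constructor
  · rintro ⟨hfst, hsnd⟩
    have hii := (forall_twist_fst_iff hinv).1 hfst
    exact ⟨fun a b i _ => (forall_twist_snd_iff hcond hii).1 hsnd a b i, hii⟩
  · rintro ⟨hi, hii⟩
    exact ⟨(forall_twist_fst_iff hinv).2 hii,
      (forall_twist_snd_iff hcond hii).2 fun a b i => hi a b i i⟩

/-- reflections for the p-shelf `a ▷_{ij} b := α_{ij}(a) ▷ b`
built from a shelf `(X, ▷)`: the maps `κ_i = t_i ∘ α_{ī i}` form a bijective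
parametric reflection iff conditions (i) and (ii) hold. -/
theorem pShelf_twisted_reflection_iff {X I : Type*} (op : X → X → X)
    (hshelf : ∀ a b c : X, op a (op b c) = op (op a b) (op a c))
    (inv : I → I) (hinv : ∀ i, inv (inv i) = i)
    (α : I → I → X ≃ X)
    (hcond : ∀ (a b : X) (i j h : I), op (α i h a) (α j h b) = α j h (op (α i j a) b))
    (t : I → X → X) (ht : ∀ i, Function.Bijective (t i)) :
    IsReflection (fun _ _ (_ : X) b => b) (fun i j a b => op (α i j a) b) inv
        (fun i a => t i (α (inv i) i a))
      ↔ ∀ (a b : X) (i j : I),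
          (t i (op (op b a) b) = op (op b a) (t i b))
          ∧ (op (α (inv i) j ((α (inv i) i).symm a)) b = op (α i j (t i a)) b) :=
  pShelf_twisted_reflection_iff_general op inv hinv α hcond t ht

end Stmt6
end

section
/- Let (X, ▷) be a rack, I an index set with an involutive map i ↦ ī, and for all i, j ∈ I let α_{ij} : X → X be bijective maps satisfying α_{ih}(a) ▷ α_{jh}(b) = α_{jh}(α_{ij}(a) ▷ b) for all a, b ∈ X and i, j, h ∈ I; let (X, ▷_{ij}) be the p-rack with a ▷_{ij} b := α_{ij}(a) ▷ b and R^{ij}(b,a) = (b, b ▷_{ij} a) the associated solution. Let t_i, κ_i : X → X be bijective maps with κ_i = t_i ∘ α_{īi} for all i ∈ I. Then the maps K_i : X → X, a ↦ κ_i(a), form a bijective parametric reflection for R if and only if, for all a, b ∈ X and i, j ∈ I: (i) t_i(a ▷ b) = a ▷ t_i(b), and (ii) α_{īj}(α_{īi}^{-1}(a)) ▷ b = α_{ij}(t_i(a)) ▷ b. -/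
/-!
Written out componentwise, the reflection equation for `R^{ij}(b, a) = (b, b ▷_{ij} a)` says
`κ_i(κ_j(b) ▷_{jī} a) = κ_i(b ▷_{j̄ī} a)` and
`κ_i(…) ▷_{ij} κ_j(b) = κ_j(κ_i(…) ▷_{ij̄} b)`.
Cancelling the bijection `κ_i` in the first and reparametrising by `α_{īi}` gives (ii).
As `κ_i` and the left translations are onto, the second says that `κ_j` carries `x ▷_{ij̄} -`
to `x ▷_{ij} -` for every `x`; the compatibility of the `α`'s turns this into `t_j` commuting
with all left translations `α_{ij}(x) ▷ -`, which is (i).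
-/
namespace Stmt7

variable {X P : Type*}

/-- The map `R^{ij} : X × X → X × X`, `R^{ij}(b, a) = (σ^{ij}_a(b), τ^{ij}_b(a))`. -/
def Rm (σ τ : P → P → X → X → X) (i j : P) : X × X → X × X :=
  fun p => (σ i j p.2 p.1, τ i j p.1 p.2)

/-- `R_{21}^{ij} = π ∘ R^{ij} ∘ π` where `π` is the flip. -/
def R21 (σ τ : P → P → X → X → X) (i j : P) : X × X → X × X :=
  Prod.swap ∘ Rm σ τ i j ∘ Prod.swap

/-- `K_1^{z}(a,b) = (κ^{z}(a), b)`. -/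
def K1 (κ : P → X → X) (z : P) : X × X → X × X := fun p => (κ z p.1, p.2)

/-- `K_2^{z}(a,b) = (a, κ^{z}(b))`. -/
def K2 (κ : P → X → X) (z : P) : X × X → X × X := fun p => (p.1, κ z p.2)

/-- The parametric set-theoretic reflection equation for `K^z` with respect to
the solution `R` and the involution `μ`. -/
def IsReflection (σ τ : P → P → X → X → X) (μ : P → P) (κ : P → X → X) : Prop :=
  ∀ z1 z2 : P,
    Rm σ τ z1 z2 ∘ K1 κ z1 ∘ R21 σ τ z2 (μ z1) ∘ K2 κ z2
      = K2 κ z2 ∘ Rm σ τ z1 (μ z2) ∘ K1 κ z1 ∘ R21 σ τ (μ z2) (μ z1)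

/-- The parametric self-distributivity law defining p-shelves,
with `d i j a b = a ▷_{ij} b`. -/
def IsPShelf (d : P → P → X → X → X) : Prop :=
  ∀ (i j k : P) (a b c : X), d i k a (d j k b c) = d j k (d i j a b) (d i k a c)

section ShelfSolution

variable {X P : Type*} {d : P → P → X → X → X} {μ : P → P} {κ : P → X → X}

theorem isReflection_shelfSolution_iff :
    IsReflection (fun _ _ (_ : X) b => b) d μ κ ↔
      ∀ (i j : P) (a b : X),
        κ i (d j (μ i) (κ j b) a) = κ i (d (μ j) (μ i) b a) ∧
          d i j (κ i (d j (μ i) (κ j b) a)) (κ j b) =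
            κ j (d i (μ j) (κ i (d (μ j) (μ i) b a)) b) := by
  simp only [IsReflection, funext_iff, Prod.forall, Function.comp_apply, Rm, R21, K1, K2,
    Prod.swap, Prod.mk.injEq]

theorem isReflection_shelfSolution_iff_of_bijective (hμ : Function.Involutive μ)
    (hκ : ∀ i, Function.Bijective (κ i)) (hd : ∀ i j a, Function.Surjective (d i j a)) :
    IsReflection (fun _ _ (_ : X) b => b) d μ κ ↔
      (∀ (i j : P) (a b : X), d i j (κ i a) b = d (μ i) j a b) ∧
        ∀ (i j : P) (a b : X), d i j a (κ j b) = κ j (d i (μ j) a b) := by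
  rw [isReflection_shelfSolution_iff]
  constructor
  · intro H
    have hleft : ∀ (i j : P) (a b : X), d i j (κ i a) b = d (μ i) j a b := by
      intro i j a b
      have h := (H (μ j) i b a).1
      rw [hμ j] at h
      exact (hκ (μ j)).injective h
    refine ⟨hleft, fun i j x b => ?_⟩
    -- `x` is reached as `κ i (d (μ j) (μ i) b a)` because both maps are onto
    obtain ⟨y, rfl⟩ := (hκ i).surjective x
    obtain ⟨a, rfl⟩ := hd (μ j) (μ i) b y
    simpa only [hleft] using (H i j a b).2
  · rintro ⟨hleft, hright⟩ i j a b
    rw [hleft]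
    exact ⟨rfl, hright _ _ _ _⟩

end ShelfSolution

theorem intertwines_twist_iff_commutes {X I : Type*} {op : X → X → X} {inv : I → I}
    {α : I → I → X ≃ X} {t : I → X → X}
    (hcond : ∀ (a b : X) (i j h : I), op (α i h a) (α j h b) = α j h (op (α i j a) b)) :
    (∀ (i j : I) (a b : X),
        op (α i j a) (t j (α (inv j) j b)) = t j (α (inv j) j (op (α i (inv j) a) b))) ↔
      ∀ (j : I) (a b : X), t j (op a b) = op a (t j b) := by
  simp_rw [← hcond]
  constructor
  · intro h j u v
    obtain ⟨a, rfl⟩ := (α j j).surjective u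
    obtain ⟨b, rfl⟩ := (α (inv j) j).surjective v
    exact (h j j a b).symm
  · intro h i j a b
    exact (h _ _ _).symm

theorem pRack_twisted_reflection_iff_general {X I : Type*} (op : X → X → X)
    (hrack : ∀ a : X, Function.Bijective (op a))
    (inv : I → I) (hinv : ∀ i, inv (inv i) = i)
    (α : I → I → X ≃ X)
    (hcond : ∀ (a b : X) (i j h : I), op (α i h a) (α j h b) = α j h (op (α i j a) b))
    (t : I → X → X) (ht : ∀ i, Function.Bijective (t i)) :
    IsReflection (fun _ _ (_ : X) b => b) (fun i j a b => op (α i j a) b) inv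
        (fun i a => t i (α (inv i) i a))
      ↔ ∀ (a b : X) (i j : I),
          (t i (op a b) = op a (t i b))
          ∧ (op (α (inv i) j ((α (inv i) i).symm a)) b = op (α i j (t i a)) b) := by
  rw [isReflection_shelfSolution_iff_of_bijective (d := fun i j a b => op (α i j a) b)
    (κ := fun i a => t i (α (inv i) i a)) hinv
    (fun i => (ht i).comp (α (inv i) i).bijective) (fun _ _ a => (hrack _).surjective),
    intertwines_twist_iff_commutes hcond]
  have hreparam : (∀ (i j : I) (a b : X), op (α i j (t i (α (inv i) i a))) b = op (α (inv i) j a) b) ↔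
      ∀ (a b : X) (i j : I), op (α (inv i) j ((α (inv i) i).symm a)) b = op (α i j (t i a)) b :=
    ⟨fun h a b i j => by simpa using (h i j ((α (inv i) i).symm a) b).symm,
      fun h i j a b => by simpa using (h (α (inv i) i a) b i j).symm⟩
  rw [hreparam]
  exact ⟨fun ⟨hii, hi⟩ a b i j => ⟨hi i a b, hii a b i j⟩,
    fun h => ⟨fun a b i j => (h a b i j).2, fun i a b => (h a b i i).1⟩⟩

/-- reflections for the p-rack `a ▷_{ij} b := α_{ij}(a) ▷ b`
built from a rack `(X, ▷)`: the maps `κ_i = t_i ∘ α_{ī i}` form a bijective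
parametric reflection iff conditions (i) and (ii) hold. -/
theorem pRack_twisted_reflection_iff {X I : Type*} (op : X → X → X)
    (hshelf : ∀ a b c : X, op a (op b c) = op (op a b) (op a c))
    (hrack : ∀ a : X, Function.Bijective (op a))
    (inv : I → I) (hinv : ∀ i, inv (inv i) = i)
    (α : I → I → X ≃ X)
    (hcond : ∀ (a b : X) (i j h : I), op (α i h a) (α j h b) = α j h (op (α i j a) b))
    (t : I → X → X) (ht : ∀ i, Function.Bijective (t i)) :
    IsReflection (fun _ _ (_ : X) b => b) (fun i j a b => op (α i j a) b) inv
        (fun i a => t i (α (inv i) i a))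
      ↔ ∀ (a b : X) (i j : I),
          (t i (op a b) = op a (t i b))
          ∧ (op (α (inv i) j ((α (inv i) i).symm a)) b = op (α i j (t i a)) b) :=
  pRack_twisted_reflection_iff_general op hrack inv hinv α hcond t ht

end Stmt7
end

section
/- Let (X, ▷) be a shelf, I an index set with an involutive map i ↦ ī, and for all i, j ∈ I let α_{ij} : X → X be bijective maps satisfying α_{ih}(a) ▷ α_{jh}(b) = α_{jh}(α_{ij}(a) ▷ b) and α_{ij} = α_{hj} ∘ α_{ih} for all a, b ∈ X and i, j, h ∈ I; let (X, ▷_{ij}) be the p-shelf with a ▷_{ij} b := α_{ij}(a) ▷ b and R^{ij}(b,a) = (b, b ▷_{ij} a) the associated solution. Let κ : X → X be a bijective map satisfying: κ(a) ▷ b = a ▷ b and κ((a ▷ b) ▷ a) = (a ▷ b) ▷ κ(a) for all a, b ∈ X (i.e. κ is a bijective reflection for the shelf (X, ▷)), and κ ∘ α_{ij} = α_{ij} ∘ κ for all i, j ∈ I. Then the maps K_i : X → X, a ↦ κ(α_{īi}(a)), form a bijective parametric reflection for R. -/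
namespace Stmt8

variable {X P : Type*}

/-- The map `R^{ij} : X × X → X × X`, `R^{ij}(b, a) = (σ^{ij}_a(b), τ^{ij}_b(a))`. -/
def Rm (σ τ : P → P → X → X → X) (i j : P) : X × X → X × X :=
  fun p => (σ i j p.2 p.1, τ i j p.1 p.2)

/-- `R_{21}^{ij} = π ∘ R^{ij} ∘ π` where `π` is the flip. -/
def R21 (σ τ : P → P → X → X → X) (i j : P) : X × X → X × X :=
  Prod.swap ∘ Rm σ τ i j ∘ Prod.swap

/-- `K_1^{z}(a,b) = (κ^{z}(a), b)`. -/
def K1 (κ : P → X → X) (z : P) : X × X → X × X := fun p => (κ z p.1, p.2)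

/-- `K_2^{z}(a,b) = (a, κ^{z}(b))`. -/
def K2 (κ : P → X → X) (z : P) : X × X → X × X := fun p => (p.1, κ z p.2)

/-- The parametric set-theoretic reflection equation for `K^z` with respect to
the solution `R` and the involution `μ`. -/
def IsReflection (σ τ : P → P → X → X → X) (μ : P → P) (κ : P → X → X) : Prop :=
  ∀ z1 z2 : P,
    Rm σ τ z1 z2 ∘ K1 κ z1 ∘ R21 σ τ z2 (μ z1) ∘ K2 κ z2
      = K2 κ z2 ∘ Rm σ τ z1 (μ z2) ∘ K1 κ z1 ∘ R21 σ τ (μ z2) (μ z1)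

/-- The parametric self-distributivity law defining p-shelves,
with `d i j a b = a ▷_{ij} b`. -/
def IsPShelf (d : P → P → X → X → X) : Prop :=
  ∀ (i j k : P) (a b c : X), d i k a (d j k b c) = d j k (d i j a b) (d i k a c)

/-! For the derived solution `R^{ij}(b, a) = (b, b ▷_{ij} a)` the first components of the two
sides of the reflection equation agree because `κ` is invisible on the left of `▷`. The second
components reduce to `u ▷ κ(v)` and `κ(u ▷ v)`, and the composition rule together with the
compatibility of `α` with `▷` shows `u = v ▷ t` for some `t`; then the shelf reflection law
`κ((v ▷ t) ▷ v) = (v ▷ t) ▷ κ(v)` identifies them. -/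

theorem isReflection_of_derived {I : Type*} {τ : I → I → X → X → X} {μ : I → I}
    {κ : I → X → X}
    (hfst : ∀ i j a b, τ j (μ i) (κ j b) a = τ (μ j) (μ i) b a)
    (hsnd : ∀ i j a b, τ i j (κ i (τ (μ j) (μ i) b a)) (κ j b)
      = κ j (τ i (μ j) (κ i (τ (μ j) (μ i) b a)) b)) :
    IsReflection (fun _ _ (_ : X) b => b) τ μ κ := by
  intro i j
  funext ⟨a, b⟩
  simp only [Function.comp_apply, Rm, R21, K1, K2, Prod.swap, hfst, hsnd]

section ShelfReflection

variable {I : Type*} {op : X → X → X} {α : I → I → X → X} {κ : X → X}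

theorem op_α_κ_left (hrefl1 : ∀ a b, op (κ a) b = op a b)
    (hcommκ : ∀ i j a, κ (α i j a) = α i j (κ a)) (i j : I) (c x : X) :
    op (α i j (κ c)) x = op (α i j c) x := by
  rw [← hcommκ, hrefl1]

theorem op_α_κ_α_eq_op_α (hcomp : ∀ i j h a, α h j (α i h a) = α i j a)
    (hrefl1 : ∀ a b, op (κ a) b = op a b)
    (hcommκ : ∀ i j a, κ (α i j a) = α i j (κ a)) (i j h : I) (a b : X) :
    op (α j h (κ (α i j b))) a = op (α i h b) a := by
  rw [op_α_κ_left hrefl1 hcommκ, hcomp]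

theorem op_α_κ_α_eq_κ_α_op
    (hcond : ∀ a b i j h, op (α i h a) (α j h b) = α j h (op (α i j a) b))
    (hcomp : ∀ i j h a, α h j (α i h a) = α i j a)
    (hrefl1 : ∀ a b, op (κ a) b = op a b)
    (hrefl2 : ∀ a b, κ (op (op a b) a) = op (op a b) (κ a))
    (hcommκ : ∀ i j a, κ (α i j a) = α i j (κ a)) (i j k l : I) (a b : X) :
    op (α i j (κ (α l i (op (α k l b) a)))) (κ (α k j b))
      = κ (α k j (op (α i k (κ (α l i (op (α k l b) a)))) b)) := by
  set c := α l i (op (α k l b) a)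
  have hc : α i j c = op (α k j b) (α l j a) := by rw [hcomp, hcond]
  calc op (α i j (κ c)) (κ (α k j b))
      = op (op (α k j b) (α l j a)) (κ (α k j b)) := by
        rw [op_α_κ_left hrefl1 hcommκ, hc]
    _ = κ (op (op (α k j b) (α l j a)) (α k j b)) := (hrefl2 _ _).symm
    _ = κ (α k j (op (α i k (κ c)) b)) := by rw [← hcond, op_α_κ_left hrefl1 hcommκ, hc]

end ShelfReflection

theorem shelf_reflection_to_pShelf_reflection_general {X I : Type*} (op : X → X → X)
    (inv : I → I)
    (α : I → I → X ≃ X)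
    (hcond : ∀ (a b : X) (i j h : I), op (α i h a) (α j h b) = α j h (op (α i j a) b))
    (hcomp : ∀ (i j h : I) (a : X), α h j (α i h a) = α i j a)
    (κ : X → X) (hκ : Function.Bijective κ)
    (hrefl1 : ∀ a b : X, op (κ a) b = op a b)
    (hrefl2 : ∀ a b : X, κ (op (op a b) a) = op (op a b) (κ a))
    (hcommκ : ∀ (i j : I) (a : X), κ (α i j a) = α i j (κ a)) :
    (∀ i : I, Function.Bijective fun a => κ (α (inv i) i a))
    ∧ IsReflection (fun _ _ (_ : X) b => b) (fun i j a b => op (α i j a) b) inv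
        (fun i a => κ (α (inv i) i a)) :=
  ⟨fun i => hκ.comp (α (inv i) i).bijective,
    isReflection_of_derived
      (fun i j a b => op_α_κ_α_eq_op_α hcomp hrefl1 hcommκ (inv j) j (inv i) a b)
      (fun i j a b =>
        op_α_κ_α_eq_κ_α_op hcond hcomp hrefl1 hrefl2 hcommκ i j (inv j) (inv i) a b)⟩

/-- if `κ` is a bijective reflection of the shelf `(X, ▷)`
commuting with the maps `α_{ij}` (which satisfy the compatibility condition and
`α_{ij} = α_{hj} ∘ α_{ih}`), then `K_i := κ ∘ α_{ī i}` is a bijective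
parametric reflection for the p-shelf solution. -/
theorem shelf_reflection_to_pShelf_reflection {X I : Type*} (op : X → X → X)
    (hshelf : ∀ a b c : X, op a (op b c) = op (op a b) (op a c))
    (inv : I → I) (hinv : ∀ i, inv (inv i) = i)
    (α : I → I → X ≃ X)
    (hcond : ∀ (a b : X) (i j h : I), op (α i h a) (α j h b) = α j h (op (α i j a) b))
    (hcomp : ∀ (i j h : I) (a : X), α h j (α i h a) = α i j a)
    (κ : X → X) (hκ : Function.Bijective κ)
    (hrefl1 : ∀ a b : X, op (κ a) b = op a b)
    (hrefl2 : ∀ a b : X, κ (op (op a b) a) = op (op a b) (κ a))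
    (hcommκ : ∀ (i j : I) (a : X), κ (α i j a) = α i j (κ a)) :
    (∀ i : I, Function.Bijective fun a => κ (α (inv i) i a))
    ∧ IsReflection (fun _ _ (_ : X) b => b) (fun i j a b => op (α i j a) b) inv
        (fun i a => κ (α (inv i) i a)) :=
  shelf_reflection_to_pShelf_reflection_general op inv α hcond hcomp κ hκ hrefl1 hrefl2 hcommκ

end Stmt8
end

section
/- Let (X, ▷_{ij}) be a p-shelf indexed by pairs of elements of a set Y, and for all z_i, z_j ∈ Y, a ∈ X, let σ^{ij}_a : X → X be bijections. Define τ^{ij}_b(a) := (σ^{ji}_{σ^{ij}_a(b)})^{-1}(σ^{ij}_a(b) ▷_{ij} a) and R^{ij}(b, a) := (σ^{ij}_a(b), τ^{ij}_b(a)). Then R^{ij} is a solution of the parametric set-theoretic Yang–Baxter equation if and only if the following two conditions hold for all a, b, c ∈ X and z_i, z_j, z_k ∈ Y: (1) σ^{ik}_a(σ^{ij}_b(c)) = σ^{ij}_{σ^{jk}_a(b)}(σ^{ik}_{τ^{jk}_b(a)}(c)); (2) σ^{ik}_c(b) ▷_{ij} σ^{jk}_c(a) = σ^{jk}_c(b ▷_{ij}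 a) (i.e. if and only if the map φ^{ij}(a,b) = (a, σ^{ji}_a(b)) is an admissible twist). -/
namespace Stmt11

variable {X P : Type*}

/-- `R_{12}` acting on the first two factors of `X × X × X`, where
`R^{ij}(b,a) = (σ^{ij}_a(b), τ^{ij}_b(a))`. -/
def R12 (σ τ : P → P → X → X → X) (i j : P) : X × X × X → X × X × X :=
  fun p => (σ i j p.2.1 p.1, τ i j p.1 p.2.1, p.2.2)

def R13 (σ τ : P → P → X → X → X) (i j : P) : X × X × X → X × X × X :=
  fun p => (σ i j p.2.2 p.1, p.2.1, τ i j p.1 p.2.2)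

def R23 (σ τ : P → P → X → X → X) (i j : P) : X × X × X → X × X × X :=
  fun p => (p.1, σ i j p.2.2 p.2.1, τ i j p.2.1 p.2.2)

/-- The parametric set-theoretic Yang–Baxter equation. -/
def IsYB (σ τ : P → P → X → X → X) : Prop :=
  ∀ i j k : P,
    R12 σ τ i j ∘ R13 σ τ i k ∘ R23 σ τ j k
      = R23 σ τ j k ∘ R13 σ τ i k ∘ R12 σ τ i j

/-- The parametric self-distributivity law defining p-shelves,
with `d i j a b = a ▷_{ij} b`. -/
def IsPShelf (d : P → P → X → X → X) : Prop :=
  ∀ (i j k : P) (a b c : X), d i k a (d j k b c) = d j k (d i j a b) (d i k a c)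

/-!
Componentwise, the Yang–Baxter equation for `R` splits into three identities. The first is
condition (1) verbatim. The second, rewritten through the defining property
`σ^{ji}_{σ^{ij}_a(b)}(τ^{ij}_b(a)) = σ^{ij}_a(b) ▷_{ij} a` of `τ` and through (1), becomes condition
(2) evaluated at `σ^{ij}_y(x)`, which ranges over all of `X` because `σ^{ij}_y` is a bijection.
The third is an identity between elements of the form `σ⁻¹(σ⁻¹(u ▷ w))`; after applying the
relevant two `σ`'s to both sides, (1) and (2) reduce it to the p-shelf law.
-/

theorem isYB_iff (σ τ : P → P → X → X → X) :
    IsYB σ τ ↔ ∀ (i j k : P) (x y z : X),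
      σ i j (σ j k z y) (σ i k (τ j k y z) x) = σ i k z (σ i j y x) ∧
      τ i j (σ i k (τ j k y z) x) (σ j k z y) = σ j k (τ i k (σ i j y x) z) (τ i j x y) ∧
      τ i k x (τ j k y z) = τ j k (τ i j x y) (τ i k (σ i j y x) z) := by
  simp only [IsYB, funext_iff, Prod.forall, Function.comp_apply, R12, R13, R23, Prod.mk.injEq]

section Twist

variable {Y : Type*} (d : Y → Y → X → X → X) (σ : Y → Y → X → X ≃ X)

def twistTau (i j : Y) (b a : X) : X :=
  (σ j i (σ i j a b)).symm (d i j (σ i j a b) a)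

local notation "τ" => twistTau d σ

/-- Condition (1) of an admissible twist. -/
def SigmaCocycle : Prop :=
  ∀ (a b c : X) (i j k : Y), σ i k a (σ i j b c) = σ i j (σ j k a b) (σ i k (τ j k b a) c)

/-- Condition (2) of an admissible twist. -/
def SigmaShelfHom : Prop :=
  ∀ (a b c : X) (i j k : Y), d i j (σ i k c b) (σ j k c a) = σ j k c (d i j b a)

variable {d σ}

theorem sigma_twistTau (i j : Y) (b a : X) : σ j i (σ i j a b) (τ i j b a) = d i j (σ i j a b) a :=
  Equiv.apply_symm_apply _ _

theorem twistTau_eq_iff {i j : Y} {b a t : X} :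
    τ i j b a = t ↔ σ j i (σ i j a b) t = d i j (σ i j a b) a :=
  Equiv.symm_apply_eq _ |>.trans eq_comm

theorem sigma_sigma_twistTau (h1 : SigmaCocycle d σ) (i j k : Y) (x y z : X) :
    σ j i (σ i k z (σ i j y x)) (σ j k (τ i k (σ i j y x) z) (τ i j x y))
      = σ j k z (d i j (σ i j y x) y) := by
  rw [← h1, sigma_twistTau]

theorem yb_second_iff (h1 : SigmaCocycle d σ) (i j k : Y) (x y z : X) :
    τ i j (σ i k (τ j k y z) x) (σ j k z y) = σ j k (τ i k (σ i j y x) z) (τ i j x y) ↔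
      d i j (σ i k z (σ i j y x)) (σ j k z y) = σ j k z (d i j (σ i j y x) y) := by
  rw [twistTau_eq_iff, ← h1, sigma_sigma_twistTau h1, eq_comm]

theorem sigmaShelfHom_of_yb_second (h1 : SigmaCocycle d σ)
    (h : ∀ (i j k : Y) (x y z : X),
      τ i j (σ i k (τ j k y z) x) (σ j k z y) = σ j k (τ i k (σ i j y x) z) (τ i j x y)) :
    SigmaShelfHom d σ := by
  intro a b c i j k
  simpa using (yb_second_iff h1 i j k ((σ i j a).symm b) a c).1 (h i j k _ a c)

theorem yb_third (hshelf : IsPShelf d) (h1 : SigmaCocycle d σ) (h2 : SigmaShelfHom d σ)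
    (i j k : Y) (x y z : X) :
    τ i k x (τ j k y z) = τ j k (τ i j x y) (τ i k (σ i j y x) z) := by
  set S := σ i j y x
  set W := σ j k z y
  set M := σ i k (τ j k y z) x
  set T := σ i k z S
  set v := τ i j x y
  set P := τ i k S z
  have hT : σ i j W M = T := (h1 z y x i j k).symm
  have hN : τ i j M W = σ j k P v := (yb_second_iff h1 i j k x y z).2 (h2 y S z i j k)
  have hTW : σ j i T (σ j k P v) = d i j T W := by rw [← hN, ← hT, sigma_twistTau]
  apply (σ k i M).injective
  apply (σ k j W).injective
  calc σ k j W (σ k i M (τ i k x (τ j k y z)))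
      = d i k T (d j k W z) := by rw [sigma_twistTau, ← h2, hT, sigma_twistTau]
    _ = d j k (d i j T W) (d i k T z) := hshelf i j k T W z
    _ = σ k i T (σ k j (σ j k P v) (τ j k v P)) := by
        rw [sigma_twistTau, ← h2, hTW, sigma_twistTau]
    _ = σ k j W (σ k i M (τ j k v P)) := by rw [h1 W M _ k i j, hT, hN]

end Twist

/-- given a p-shelf `(X, ▷_{ij})` and bijections `σ^{ij}_a`, with
`τ^{ij}_b(a) := (σ^{ji}_{σ^{ij}_a(b)})⁻¹(σ^{ij}_a(b) ▷_{ij} a)`, the map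
`R^{ij}(b,a) = (σ^{ij}_a(b), τ^{ij}_b(a))` is a solution of the parametric
Yang–Baxter equation iff the two admissible-twist conditions hold. -/
theorem twisted_solution_iff_admissible {X Y : Type*}
    (d : Y → Y → X → X → X) (hshelf : IsPShelf d)
    (σ : Y → Y → X → X ≃ X) :
    IsYB (fun i j a b => σ i j a b)
        (fun i j b a => (σ j i (σ i j a b)).symm (d i j (σ i j a b) a))
      ↔ ∀ (a b c : X) (i j k : Y),
          (σ i k a (σ i j b c)
              = σ i j (σ j k a b)
                  (σ i k ((σ k j (σ j k a b)).symm (d j k (σ j k a b) a)) c))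
          ∧ (d i j (σ i k c b) (σ j k c a) = σ j k c (d i j b a)) := by
  suffices IsYB (fun i j a b => σ i j a b) (twistTau d σ) ↔ SigmaCocycle d σ ∧ SigmaShelfHom d σ by
    simp only [forall_and]
    exact this
  rw [isYB_iff]
  constructor
  · intro hyb
    have h1 : SigmaCocycle d σ := fun a b c i j k => (hyb i j k c b a).1.symm
    exact ⟨h1, sigmaShelfHom_of_yb_second h1 fun i j k x y z => (hyb i j k x y z).2.1⟩
  · rintro ⟨h1, h2⟩ i j k x y z
    exact ⟨(h1 z y x i j k).symm, (yb_second_iff h1 i j k x y z).2 (h2 y _ z i j k),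
      yb_third hshelf h1 h2 i j k x y z⟩

end Stmt11
end

section
/- Let (X, ▷_{ij}) be a p-shelf indexed by pairs of elements of a set Y with an involutive map μ (write z̄ = μ(z)). Let R^{ij}(b,a) = (σ^{ij}_a(b), τ^{ij}_b(a)) be a left non-degenerate solution of the parametric Yang–Baxter equation (each σ^{ij}_a bijective) such that τ^{ij}_b(a) = (σ^{ji}_{σ^{ij}_a(b)})^{-1}(σ^{ij}_a(b) ▷_{ij} a) for all a, b ∈ X and z_i, z_j ∈ Y, and let S^{ij}(b,a) = (b, b ▷_{ij} a) be the p-shelf solution. Suppose the bijective maps K^{z} : X → X, a ↦ κ^{z}(a), form a parametric reflection for S, and suppose κ^{z_j}(σ^{z̄_j z_i}_a(b)) = σ^{z_j z_i}_a(κ^{z_j}(b)) for all a, b ∈ X and z_i, z_j ∈ Y. Then K^{z} is also a parametric reflection for R. -/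
/-!
Read componentwise, the reflection equation for the shelf solution says that `κ` can be absorbed
into the left argument of `▷` (`shelf_absorb`) and intertwines the right argument (`shelf_comm`).
The intertwining of `κ` with `σ` passes to `σ⁻¹`; after cancelling `σ ∘ σ⁻¹`, the first component
of the reflection equation for `R` becomes trivial, and the second component becomes `shelf_comm`
pushed through `σ⁻¹`.
-/

namespace Stmt12

variable {X P : Type*}

/-- `R_{12}` acting on the first two factors of `X × X × X`, where
`R^{ij}(b,a) = (σ^{ij}_a(b), τ^{ij}_b(a))`. -/
def R12 (σ τ : P → P → X → X → X) (i j : P) : X × X × X → X × X × X :=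
  fun p => (σ i j p.2.1 p.1, τ i j p.1 p.2.1, p.2.2)

def R13 (σ τ : P → P → X → X → X) (i j : P) : X × X × X → X × X × X :=
  fun p => (σ i j p.2.2 p.1, p.2.1, τ i j p.1 p.2.2)

def R23 (σ τ : P → P → X → X → X) (i j : P) : X × X × X → X × X × X :=
  fun p => (p.1, σ i j p.2.2 p.2.1, τ i j p.2.1 p.2.2)

/-- The parametric set-theoretic Yang–Baxter equation. -/
def IsYB (σ τ : P → P → X → X → X) : Prop :=
  ∀ i j k : P,
    R12 σ τ i j ∘ R13 σ τ i k ∘ R23 σ τ j k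
      = R23 σ τ j k ∘ R13 σ τ i k ∘ R12 σ τ i j

/-- The map `R^{ij} : X × X → X × X`, `R^{ij}(b, a) = (σ^{ij}_a(b), τ^{ij}_b(a))`. -/
def Rm (σ τ : P → P → X → X → X) (i j : P) : X × X → X × X :=
  fun p => (σ i j p.2 p.1, τ i j p.1 p.2)

/-- `R_{21}^{ij} = π ∘ R^{ij} ∘ π` where `π` is the flip. -/
def R21 (σ τ : P → P → X → X → X) (i j : P) : X × X → X × X :=
  Prod.swap ∘ Rm σ τ i j ∘ Prod.swap

/-- `K_1^{z}(a,b) = (κ^{z}(a), b)`. -/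
def K1 (κ : P → X → X) (z : P) : X × X → X × X := fun p => (κ z p.1, p.2)

/-- `K_2^{z}(a,b) = (a, κ^{z}(b))`. -/
def K2 (κ : P → X → X) (z : P) : X × X → X × X := fun p => (p.1, κ z p.2)

/-- The parametric set-theoretic reflection equation for `K^z` with respect to
the solution `R` and the involution `μ`. -/
def IsReflection (σ τ : P → P → X → X → X) (μ : P → P) (κ : P → X → X) : Prop :=
  ∀ z1 z2 : P,
    Rm σ τ z1 z2 ∘ K1 κ z1 ∘ R21 σ τ z2 (μ z1) ∘ K2 κ z2
      = K2 κ z2 ∘ Rm σ τ z1 (μ z2) ∘ K1 κ z1 ∘ R21 σ τ (μ z2) (μ z1)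

/-- The parametric self-distributivity law defining p-shelves,
with `d i j a b = a ▷_{ij} b`. -/
def IsPShelf (d : P → P → X → X → X) : Prop :=
  ∀ (i j k : P) (a b c : X), d i k a (d j k b c) = d j k (d i j a b) (d i k a c)

theorem isReflection_iff {σ τ : P → P → X → X → X} {μ : P → P} {κ : P → X → X} :
    IsReflection σ τ μ κ ↔ ∀ (z1 z2 : P) (b a : X),
      σ z1 z2 (σ z2 (μ z1) b (κ z2 a)) (κ z1 (τ z2 (μ z1) (κ z2 a) b))
          = σ z1 (μ z2) (σ (μ z2) (μ z1) b a) (κ z1 (τ (μ z2) (μ z1) a b)) ∧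
        τ z1 z2 (κ z1 (τ z2 (μ z1) (κ z2 a) b)) (σ z2 (μ z1) b (κ z2 a))
          = κ z2 (τ z1 (μ z2) (κ z1 (τ (μ z2) (μ z1) a b)) (σ (μ z2) (μ z1) b a)) := by
  simp only [IsReflection, funext_iff, Prod.forall, Function.comp_apply, Rm, R21, K1, K2,
    Prod.swap_prod_mk, Prod.mk.injEq]

section

variable {d : P → P → X → X → X} {μ : P → P} {κ : P → X → X}

theorem IsReflection.shelf_absorb (h : IsReflection (fun _ _ (_ : X) b => b) d μ κ)
    (hκ : ∀ z, Function.Injective (κ z)) (z1 z2 : P) (a b : X) :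
    d z2 (μ z1) (κ z2 a) b = d (μ z2) (μ z1) a b :=
  hκ z1 (isReflection_iff.mp h z1 z2 b a).1

theorem IsReflection.shelf_comm (h : IsReflection (fun _ _ (_ : X) b => b) d μ κ)
    (hκ : ∀ z, Function.Injective (κ z)) (z1 z2 : P) (a b : X) :
    d z1 z2 (κ z1 (d (μ z2) (μ z1) a b)) (κ z2 a)
      = κ z2 (d z1 (μ z2) (κ z1 (d (μ z2) (μ z1) a b)) a) := by
  have h2 := (isReflection_iff.mp h z1 z2 b a).2
  rwa [h.shelf_absorb hκ] at h2

end

theorem reflection_transfer_general {X Y : Type*}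
    (d : Y → Y → X → X → X)
    (μ : Y → Y)
    (σ : Y → Y → X → X ≃ X)
    (κ : Y → X → X) (hκ : ∀ z, Function.Bijective (κ z))
    (hSrefl : IsReflection (fun _ _ (_ : X) b => b) d μ κ)
    (hcond : ∀ (a b : X) (zi zj : Y), κ zj (σ (μ zj) zi a b) = σ zj zi a (κ zj b)) :
    IsReflection (fun i j a b => σ i j a b)
      (fun i j b a => (σ j i (σ i j a b)).symm (d i j (σ i j a b) a)) μ κ := by
  have hinj : ∀ z, Function.Injective (κ z) := fun z => (hκ z).injective
  have hcond_symm : ∀ (a b : X) (zi zj : Y),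
      κ zj ((σ (μ zj) zi a).symm b) = (σ zj zi a).symm (κ zj b) := fun a b zi zj =>
    Function.Semiconj.inverses_right (hcond a · zi zj)
      (σ (μ zj) zi a).right_inv (σ zj zi a).left_inv b
  rw [isReflection_iff]
  intro z1 z2 b a
  rw [← hcond b a (μ z1) z2, hSrefl.shelf_absorb hinj]
  rw [hcond_symm, hcond_symm, Equiv.apply_symm_apply, Equiv.apply_symm_apply, hcond_symm,
    hSrefl.shelf_comm hinj]
  exact ⟨rfl, rfl⟩

/-- if `K^z = κ^z` is a bijective parametric reflection for the
p-shelf solution `S^{ij}(b,a) = (b, b ▷_{ij} a)` and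
`κ^{z_j}(σ^{z̄_j z_i}_a(b)) = σ^{z_j z_i}_a(κ^{z_j}(b))` holds, then `K^z` is
also a parametric reflection for the left non-degenerate solution
`R^{ij}(b,a) = (σ^{ij}_a(b), τ^{ij}_b(a))` with
`τ^{ij}_b(a) = (σ^{ji}_{σ^{ij}_a(b)})⁻¹(σ^{ij}_a(b) ▷_{ij} a)`. -/
theorem reflection_transfer {X Y : Type*}
    (d : Y → Y → X → X → X) (hshelf : IsPShelf d)
    (μ : Y → Y) (hμ : ∀ z, μ (μ z) = z)
    (σ : Y → Y → X → X ≃ X)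
    (hR : IsYB (fun i j a b => σ i j a b)
        (fun i j b a => (σ j i (σ i j a b)).symm (d i j (σ i j a b) a)))
    (κ : Y → X → X) (hκ : ∀ z, Function.Bijective (κ z))
    (hSrefl : IsReflection (fun _ _ (_ : X) b => b) d μ κ)
    (hcond : ∀ (a b : X) (zi zj : Y), κ zj (σ (μ zj) zi a b) = σ zj zi a (κ zj b)) :
    IsReflection (fun i j a b => σ i j a b)
      (fun i j b a => (σ j i (σ i j a b)).symm (d i j (σ i j a b) a)) μ κ :=
  reflection_transfer_general d μ σ κ hκ hSrefl hcond

end Stmt12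
end

section
/- Let (X, ∘) be a group, Y an index set, and for all z_i, z_j ∈ Y and a, b ∈ X let σ^{ij}_a, τ^{ij}_b : X → X be maps such that each σ^{ij}_a is bijective and, for all a, b ∈ X: a ∘ b = σ^{ij}_a(b) ∘ τ^{ij}_b(a) and σ^{ji}_{σ^{ij}_a(b)}(τ^{ij}_b(a)) = a. Let h : Y × Y → Y be a symmetric function (h(z_i, z_j) = h(z_j, z_i)) and define a •_{ji} b := a ∘ (σ^{ij}_a)^{-1}(b) ∘ h(z_i, z_j). Then a •_{ji} b = b •_{ij} a for all a, b ∈ X and z_i, z_j ∈ Y. -/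
/-!
With `c := (σ^{ij}_a)⁻¹(b)` the factorization reads `a ∘ c = b ∘ τ^{ij}_c(a)`, and the
reversal law says `σ^{ji}_b(τ^{ij}_c(a)) = a`, i.e. `(σ^{ji}_b)⁻¹(a) = τ^{ij}_c(a)`.
Hence `a ∘ (σ^{ij}_a)⁻¹(b) = b ∘ (σ^{ji}_b)⁻¹(a)`, and the symmetric factor `h` is the same
on both sides.
-/

section Factorization

variable {X : Type*} (σ σ' : X → X ≃ X) (τ : X → X → X)

theorem symm_apply_eq_of_reversal (hrev : ∀ a b, σ' (σ a b) (τ b a) = a) (a b : X) :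
    (σ' b).symm a = τ ((σ a).symm b) a := by
  rw [Equiv.symm_apply_eq]
  conv_lhs => rw [← hrev a ((σ a).symm b), Equiv.apply_symm_apply]

theorem mul_symm_apply_comm [Mul X] (hfact : ∀ a b, a * b = σ a b * τ b a)
    (hrev : ∀ a b, σ' (σ a b) (τ b a) = a) (a b : X) :
    a * (σ a).symm b = b * (σ' b).symm a := by
  rw [symm_apply_eq_of_reversal σ σ' τ hrev, hfact, Equiv.apply_symm_apply]

end Factorization

/-- let `(X, ∘)` be a group, `Y ⊆ X` a parameter set, and suppose
the bijections `σ^{ij}_a` and maps `τ^{ij}_b` satisfy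
`a ∘ b = σ^{ij}_a(b) ∘ τ^{ij}_b(a)` and `σ^{ji}_{σ^{ij}_a(b)}(τ^{ij}_b(a)) = a`.
Then for any symmetric `h : Y × Y → Y`, the operation
`a •_{ji} b := a ∘ (σ^{ij}_a)⁻¹(b) ∘ h(z_i, z_j)` satisfies
`a •_{ji} b = b •_{ij} a`. -/
theorem bullet_symm {X : Type*} [Group X] (Y : Set X)
    (σ : Y → Y → X → X ≃ X) (τ : Y → Y → X → X → X)
    (hfact : ∀ (i j : Y) (a b : X), a * b = σ i j a b * τ i j b a)
    (hrev : ∀ (i j : Y) (a b : X), σ j i (σ i j a b) (τ i j b a) = a)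
    (h : Y → Y → Y) (hsymm : ∀ i j : Y, h i j = h j i) :
    ∀ (i j : Y) (a b : X),
      a * (σ i j a).symm b * (h i j : X) = b * (σ j i b).symm a * (h j i : X) := by
  intro i j a b
  rw [hsymm i j, mul_symm_apply_comm (σ i j) (σ j i) (τ i j) (hfact i j) (hrev i j)]
end

section
/- Let (X, +, ∘) be a skew left brace and Y ⊆ D(X) ∩ Z(X,+) a subset such that z_i ∘ z_j = z_j ∘ z_i for all z_i, z_j ∈ Y. For z_i, z_j ∈ Y and a, b ∈ X define σ^{ij}_a(b) := z_i^{-1} − a ∘ z_i^{-1} ∘ z_j + a ∘ b ∘ z_j, τ^{ij}_b(a) := σ^{ij}_a(b)^{-1} ∘ a ∘ b (inverses taken in (X, ∘)), and b ▷_{ij} a := −b ∘ z_i ∘ z_j^{-1} + a + b ∘ z_i ∘ z_j^{-1}. Then: (X, ▷_{ij}) is a p-rack; each σ^{ij}_a is bijective; a ∘ b = σ^{ij}_a(b) ∘ τ^{ij}_b(a); the admissible twist conditions σ^{ik}_a(σ^{ij}_b(c)) = σ^{ij}_{σ^{jk}_a(b)}(σ^{ik}_{τ^{jk}_b(a)}(c))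 and σ^{ik}_c(b) ▷_{ij} σ^{jk}_c(a) = σ^{jk}_c(b ▷_{ij} a) hold for all a, b, c ∈ X and z_i, z_j, z_k ∈ Y; and consequently R^{ij}(b, a) := (σ^{ij}_a(b), τ^{ij}_b(a)) is a solution of the parametric set-theoretic Yang–Baxter equation. -/
/-!
In a skew left brace every left multiplication `x ↦ a ∘ x`, and every right multiplication
`x ↦ x ∘ z` with `z ∈ D(X)`, is a heap endomorphism of `(X, +)`: it preserves `x - y + u`.
Hence `σ^{ip}_a ∘ σ^{iq}_b = σ^{i,qp}_{a ∘ b}`, which is the first twist condition.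
For `z_i⁻¹` central, `σ^{ij}_c` is an additive map conjugated by the translation by `z_i⁻¹`,
so it respects the conjugation `▷`; this is the second one. Finally
`σ^{jk}_z(y) ∘ σ^{ik}_{τ^{jk}_y(z)}(x) = σ^{z_i z_j, k}_z(y ∘ x)` is symmetric in `i, j`,
and together with the first twist condition and `a ∘ b = σ_a(b) ∘ τ_b(a)` this gives the
Yang–Baxter equation component by component.
-/

namespace Stmt14

variable {X P : Type*}

/-- `R_{12}` acting on the first two factors of `X × X × X`, where
`R^{ij}(b,a) = (σ^{ij}_a(b), τ^{ij}_b(a))`. -/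
def R12 (σ τ : P → P → X → X → X) (i j : P) : X × X × X → X × X × X :=
  fun p => (σ i j p.2.1 p.1, τ i j p.1 p.2.1, p.2.2)

def R13 (σ τ : P → P → X → X → X) (i j : P) : X × X × X → X × X × X :=
  fun p => (σ i j p.2.2 p.1, p.2.1, τ i j p.1 p.2.2)

def R23 (σ τ : P → P → X → X → X) (i j : P) : X × X × X → X × X × X :=
  fun p => (p.1, σ i j p.2.2 p.2.1, τ i j p.2.1 p.2.2)

/-- The parametric set-theoretic Yang–Baxter equation. -/
def IsYB (σ τ : P → P → X → X → X) : Prop :=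
  ∀ i j k : P,
    R12 σ τ i j ∘ R13 σ τ i k ∘ R23 σ τ j k
      = R23 σ τ j k ∘ R13 σ τ i k ∘ R12 σ τ i j

/-- The parametric self-distributivity law defining p-shelves,
with `d i j a b = a ▷_{ij} b`. -/
def IsPShelf (d : P → P → X → X → X) : Prop :=
  ∀ (i j k : P) (a b c : X), d i k a (d j k b c) = d j k (d i j a b) (d i k a c)

variable [AddGroup X]

/-- `σ^{ij}_a(b) := z_i⁻¹ − a ∘ z_i⁻¹ ∘ z_j + a ∘ b ∘ z_j` (with `∘ = mul`,
`⁻¹ = inv` the skew-brace multiplicative structure, `+` the additive one). -/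
def sig (mul : X → X → X) (inv : X → X) {Y : Set X} (i j : Y) (a b : X) : X :=
  inv ↑i - mul (mul a (inv ↑i)) ↑j + mul (mul a b) ↑j

/-- `τ^{ij}_b(a) := σ^{ij}_a(b)⁻¹ ∘ a ∘ b`. -/
def tau (mul : X → X → X) (inv : X → X) {Y : Set X} (i j : Y) (b a : X) : X :=
  mul (mul (inv (sig mul inv i j a b)) a) b

/-- `b ▷_{ij} a := −b ∘ z_i ∘ z_j⁻¹ + a + b ∘ z_i ∘ z_j⁻¹`. -/
def tri (mul : X → X → X) (inv : X → X) {Y : Set X} (i j : Y) (b a : X) : X :=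
  -(mul (mul b ↑i) (inv ↑j)) + a + mul (mul b ↑i) (inv ↑j)

section Heap

variable {G H : Type*} [AddGroup G] [AddGroup H] {f : G → H}

def IsHeapHom (f : G → H) : Prop :=
  ∀ x y u : G, f (x - y + u) = f x - f y + f u

theorem map_zero_eq_of_map_add {c : H} (hf : ∀ x y, f (x + y) = f x - c + f y) : f 0 = c := by
  have h := hf 0 0
  rw [add_zero, eq_comm, add_eq_right, sub_eq_zero] at h
  exact h

theorem isHeapHom_of_map_add {c : H} (hf : ∀ x y, f (x + y) = f x - c + f y) :
    IsHeapHom f := by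
  have hneg (y : G) : f (-y) = c - f y + c := by
    have h := hf y (-y)
    rw [add_neg_cancel, map_zero_eq_of_map_add hf] at h
    rw [eq_neg_add_of_add_eq h.symm, neg_sub]
  intro x y u
  rw [sub_eq_add_neg, hf, hf, hneg]
  simp [sub_eq_add_neg, add_assoc]

theorem IsHeapHom.const_add (hf : IsHeapHom f) (c : H) : IsHeapHom (fun x => c + f x) := by
  intro x y u
  show c + f (x - y + u) = c + f x - (c + f y) + (c + f u)
  rw [hf]
  simp [sub_eq_add_neg, add_assoc]

theorem isHeapHom_add_left (c : G) : IsHeapHom (c + ·) := by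
  intro x y u
  simp [sub_eq_add_neg, add_assoc]

theorem IsHeapHom.inverse {g : H → G} (hf : IsHeapHom f) (hgf : Function.LeftInverse g f)
    (hfg : Function.RightInverse g f) : IsHeapHom g := by
  intro x y u
  apply hgf.injective
  rw [hf, hfg, hfg, hfg, hfg]

theorem IsHeapHom.map_neg_add_add (hf : IsHeapHom f) (h0 : f 0 ∈ AddSubgroup.center H)
    (p a : G) : f (-p + a + p) = -f p + f a + f p := by
  have hcomm : (-f p + f a) + -f 0 = -f 0 + (-f p + f a) :=
    AddSubgroup.mem_center_iff.mp (neg_mem h0) _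
  have hsplit : f (-p + a + p) = f 0 - f p + (f a - f 0 + f p) := by
    rw [← hf, ← hf]
    simp [add_assoc]
  rw [hsplit, show f 0 - f p + (f a - f 0 + f p) = f 0 + ((-f p + f a) + -f 0) + f p by
    simp [sub_eq_add_neg, add_assoc], hcomm, add_neg_cancel_left]

end Heap

def IsSkewBrace (B : Type*) [AddGroup B] [Group B] : Prop :=
  ∀ a b c : B, a * (b + c) = a * b - a + a * c

section SkewBrace

variable [Group X]

theorem IsSkewBrace.mul_sub_add (hB : IsSkewBrace X) (a x y u : X) :
    a * (x - y + u) = a * x - a * y + a * u :=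
  isHeapHom_of_map_add (f := (a * ·)) (hB a) x y u

theorem IsSkewBrace.one_eq_zero (hB : IsSkewBrace X) : (1 : X) = 0 := by
  simpa using (map_zero_eq_of_map_add (f := ((1 : X) * ·)) (hB 1)).symm

theorem IsSkewBrace.neg_add_add_mul (hB : IsSkewBrace X) {w : X} (hw : IsHeapHom (· * w))
    (hwc : w ∈ AddSubgroup.center X) (p a : X) :
    (-p + a + p) * w = -(p * w) + a * w + p * w :=
  hw.map_neg_add_add (by rwa [← hB.one_eq_zero, one_mul]) p a

theorem isHeapHom_mul_inv {z : X} (hz : IsHeapHom (· * z)) : IsHeapHom (· * z⁻¹) :=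
  hz.inverse (fun x => mul_inv_cancel_right x z) (fun x => inv_mul_cancel_right x z)

theorem IsSkewBrace.inv_mem_center (hB : IsSkewBrace X) {z : X} (hz : IsHeapHom (· * z))
    (hzc : z ∈ AddSubgroup.center X) : z⁻¹ ∈ AddSubgroup.center X := by
  have hz' : ∀ x y u : X, (x - y + u) * z = x * z - y * z + u * z := hz
  have h0 : (0 : X) * z = z := by rw [← hB.one_eq_zero, one_mul]
  have h1 : z⁻¹ * z = 0 := by rw [inv_mul_cancel, hB.one_eq_zero]
  refine AddSubgroup.mem_center_iff.mpr fun y => mul_right_cancel (b := z) ?_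
  have e1 := hz' y 0 z⁻¹
  have e2 := hz' z⁻¹ 0 y
  rw [sub_zero, h0, h1, add_zero] at e1
  rw [sub_zero, h0, h1, zero_sub] at e2
  rw [e1, e2, sub_eq_add_neg, (AddSubgroup.mem_center_iff.mp (neg_mem hzc) _)]

end SkewBrace

section BraceMaps

variable [Group X]

/- `sig`, `tau` and `tri` for a genuine `Group` structure on `X` and parameters `u, v : X`;
the originals reduce to these definitionally once `mul`, `inv` are the group operations. -/
def braceSigma (u v a b : X) : X := u⁻¹ - a * u⁻¹ * v + a * b * v

def braceTau (u v b a : X) : X := (braceSigma u v a b)⁻¹ * a * b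

def braceTri (u v b a : X) : X := -(b * u * v⁻¹) + a + b * u * v⁻¹

theorem braceSigma_bijective (u v a : X) : Function.Bijective (braceSigma u v a) :=
  (AddGroup.addLeft_bijective _).comp
    ((Group.mulRight_bijective v).comp (Group.mulLeft_bijective a))

theorem braceTri_bijective (u v b : X) : Function.Bijective (braceTri u v b) :=
  (AddGroup.addRight_bijective _).comp (AddGroup.addLeft_bijective _)

theorem braceSigma_mul_braceTau (u v a b : X) :
    braceSigma u v a b * braceTau u v b a = a * b := by
  simp [braceTau, mul_assoc]

theorem IsSkewBrace.braceTri_self_distrib (hB : IsSkewBrace X) {zi zj zk : X}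
    (hj : IsHeapHom (· * zj)) (hjc : zj ∈ AddSubgroup.center X)
    (hk : IsHeapHom (· * zk⁻¹)) (hkc : zk⁻¹ ∈ AddSubgroup.center X) (a b c : X) :
    braceTri zi zk a (braceTri zj zk b c)
      = braceTri zj zk (braceTri zi zj a b) (braceTri zi zk a c) := by
  have hshift : braceTri zi zj a b * zj * zk⁻¹
      = -(a * zi * zk⁻¹) + b * zj * zk⁻¹ + a * zi * zk⁻¹ := by
    rw [braceTri, hB.neg_add_add_mul hj hjc, hB.neg_add_add_mul hk hkc]
    simp [mul_assoc]
  conv_rhs => rw [braceTri, hshift]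
  simp [braceTri, add_assoc]

theorem IsSkewBrace.braceSigma_comp (hB : IsSkewBrace X) {u p : X} (hp : IsHeapHom (· * p))
    (q a b c : X) :
    braceSigma u p a (braceSigma u q b c) = braceSigma u (q * p) (a * b) c := by
  have hp' : ∀ x y w : X, (x - y + w) * p = x * p - y * p + w * p := hp
  rw [braceSigma, braceSigma, hB.mul_sub_add, hp', braceSigma]
  simp [sub_eq_add_neg, add_assoc, mul_assoc]

theorem IsSkewBrace.braceSigma_twist (hB : IsSkewBrace X) {zi zj zk : X}
    (hj : IsHeapHom (· * zj)) (hk : IsHeapHom (· * zk)) (hjk : Commute zj zk) (a b c : X) :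
    braceSigma zi zk a (braceSigma zi zj b c)
      = braceSigma zi zj (braceSigma zj zk a b) (braceSigma zi zk (braceTau zj zk b a) c) := by
  rw [hB.braceSigma_comp hk, hB.braceSigma_comp hj, braceSigma_mul_braceTau, hjk.eq]

theorem braceSigma_mul_right {u k w : X} (hw : IsHeapHom (· * w)) (hkw : Commute k w)
    (c b : X) : braceSigma u k c b * w = braceSigma (w⁻¹ * u) k c (b * w) := by
  have hw' : ∀ x y v : X, (x - y + v) * w = x * w - y * w + v * w := hw
  rw [braceSigma, hw', braceSigma, mul_inv_rev, inv_inv]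
  simp only [mul_assoc, hkw.eq]

theorem IsSkewBrace.braceSigma_neg_add_add (hB : IsSkewBrace X) {u k : X}
    (hk : IsHeapHom (· * k)) (hu : u⁻¹ ∈ AddSubgroup.center X) (c p a : X) :
    braceSigma u k c (-p + a + p)
      = -braceSigma u k c p + braceSigma u k c a + braceSigma u k c p := by
  set t := u⁻¹
  set g : X → X := fun x => c * x * k
  have hg : IsHeapHom g := fun x y v => by
    have hk' : ∀ x y v : X, (x - y + v) * k = x * k - y * k + v * k := hk
    simp only [g, hB.mul_sub_add, hk']
  have hψ : IsHeapHom (fun x => -g 0 + g x) := hg.const_add _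
  -- `σ_c = (t + ·) ∘ ψ ∘ (-t + ·)`, `t` central, `ψ` additive: each factor respects `▷`
  have hσ (x : X) : braceSigma u k c x = t + (-g 0 + g (-t + x)) := by
    rw [show -t + x = 0 - t + x by rw [zero_sub], hg]
    simp [braceSigma, g, t, sub_eq_add_neg, add_assoc]
  simp only [hσ]
  rw [(isHeapHom_add_left (-t)).map_neg_add_add (by simpa using neg_mem hu),
    hψ.map_neg_add_add (by simp), (isHeapHom_add_left t).map_neg_add_add (by simpa using hu)]

theorem IsSkewBrace.braceTri_braceSigma (hB : IsSkewBrace X) {zi zj zk : X}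
    (hi : IsHeapHom (· * zi)) (hj : IsHeapHom (· * zj⁻¹)) (hk : IsHeapHom (· * zk))
    (hjc : zj⁻¹ ∈ AddSubgroup.center X) (hki : Commute zk zi) (hkj : Commute zk zj)
    (a b c : X) :
    braceTri zi zj (braceSigma zi zk c b) (braceSigma zj zk c a)
      = braceSigma zj zk c (braceTri zi zj b a) := by
  have hshift : braceSigma zi zk c b * zi * zj⁻¹ = braceSigma zj zk c (b * zi * zj⁻¹) := by
    rw [braceSigma_mul_right hi hki, braceSigma_mul_right hj hkj.inv_right]
    simp
  rw [braceTri, hshift, braceTri, hB.braceSigma_neg_add_add hk hjc]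

theorem IsSkewBrace.mul_braceSigma (hB : IsSkewBrace X) (V u k W x : X) :
    V * braceSigma u k W x = V * u⁻¹ - V * W * u⁻¹ * k + V * W * x * k := by
  rw [braceSigma, hB.mul_sub_add]
  simp only [mul_assoc]

theorem IsSkewBrace.braceSigma_mul_braceSigma_braceTau (hB : IsSkewBrace X) {zi zj zk : X}
    (hi : IsHeapHom (· * zi⁻¹)) (hki : Commute zk zi) (x y z : X) :
    braceSigma zj zk z y * braceSigma zi zk (braceTau zj zk y z) x
      = braceSigma (zi * zj) zk z (y * x) := by
  set A := braceSigma zj zk z y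
  have hA : A * zi⁻¹ - z * y * zi⁻¹ * zk = (zi * zj)⁻¹ - z * (zi * zj)⁻¹ * zk := by
    rw [braceSigma_mul_right hi hki.inv_right, inv_inv]
    simp [braceSigma, mul_assoc]
  rw [braceTau, hB.mul_braceSigma, show A * (A⁻¹ * z * y) = z * y by group, hA, braceSigma,
    mul_assoc z y x]

end BraceMaps

theorem isYB_of_twist {G : Type*} [Group G] {σ τ : P → P → G → G → G}
    (hfac : ∀ i j a b, σ i j a b * τ i j b a = a * b)
    (htwist : ∀ i j k a b c, σ i k a (σ i j b c) = σ i j (σ j k a b) (σ i k (τ j k b a) c))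
    (hmp : ∀ i j k x y z, σ j k z y * σ i k (τ j k y z) x
      = σ i k z (σ i j y x) * σ j k (τ i k (σ i j y x) z) (τ i j x y)) :
    IsYB σ τ := by
  -- `hmp` matches the products of the first two outputs; `hfac` then fixes the remaining ones
  intro i j k
  funext ⟨x, y, z⟩
  simp only [Function.comp_apply, R12, R13, R23, Prod.mk.injEq]
  have hfirst := (htwist i j k z y x).symm
  refine ⟨hfirst, ?_, ?_⟩
  · apply mul_left_cancel (a := σ i j (σ j k z y) (σ i k (τ j k y z) x))
    rw [hfac, hfirst, hmp]
  · have hleft : σ j k z y * σ i k (τ j k y z) x * τ i k x (τ j k y z) = z * y * x := by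
      rw [mul_assoc, hfac, ← mul_assoc, hfac]
    have hright : σ i k z (σ i j y x) * σ j k (τ i k (σ i j y x) z) (τ i j x y)
        * τ j k (τ i j x y) (τ i k (σ i j y x) z) = z * y * x := by
      rw [mul_assoc, hfac, ← mul_assoc, hfac, mul_assoc, hfac, mul_assoc]
    apply mul_left_cancel (a := σ j k z y * σ i k (τ j k y z) x)
    rw [hleft, hmp, hright]

theorem skew_brace_solution_general {X : Type*} [AddGroup X]
    (mul : X → X → X) (inv : X → X)
    (hassoc : ∀ a b c : X, mul (mul a b) c = mul a (mul b c))
    (hid' : ∀ a : X, mul 0 a = a)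
    (hinv' : ∀ a : X, mul (inv a) a = 0)
    (hbrace : ∀ a b c : X, mul a (b + c) = mul a b - a + mul a c)
    (Y : Set X)
    (hD : ∀ z ∈ Y, ∀ a b : X, mul (a + b) z = mul a z - z + mul b z)
    (hZ : ∀ z ∈ Y, ∀ a : X, a + z = z + a)
    (hcomm : ∀ z ∈ Y, ∀ w ∈ Y, mul z w = mul w z) :
    (IsPShelf (fun (i j : Y) (a b : X) => tri mul inv i j a b)
      ∧ ∀ (i j : Y) (a : X), Function.Bijective (tri mul inv i j a))
    ∧ (∀ (i j : Y) (a : X), Function.Bijective (sig mul inv i j a))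
    ∧ (∀ (i j : Y) (a b : X), mul a b = mul (sig mul inv i j a b) (tau mul inv i j b a))
    ∧ (∀ (i j k : Y) (a b c : X),
        sig mul inv i k a (sig mul inv i j b c)
          = sig mul inv i j (sig mul inv j k a b)
              (sig mul inv i k (tau mul inv j k b a) c))
    ∧ (∀ (i j k : Y) (a b c : X),
        tri mul inv i j (sig mul inv i k c b) (sig mul inv j k c a)
          = sig mul inv j k c (tri mul inv i j b a))
    ∧ IsYB (fun (i j : Y) (a b : X) => sig mul inv i j a b)
        (fun (i j : Y) (b a : X) => tau mul inv i j b a) := by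
  let : Mul X := ⟨mul⟩
  let : Inv X := ⟨inv⟩
  let : One X := ⟨0⟩
  let : Group X := Group.ofLeftAxioms hassoc hid' hinv'
  have hB : IsSkewBrace X := hbrace
  have hR (i : Y) : IsHeapHom (· * (i : X)) := isHeapHom_of_map_add (hD i i.2)
  have hC (i : Y) : (i : X) ∈ AddSubgroup.center X := AddSubgroup.mem_center_iff.mpr (hZ i i.2)
  have hCinv (i : Y) : (i : X)⁻¹ ∈ AddSubgroup.center X := hB.inv_mem_center (hR i) (hC i)
  have hM (i j : Y) : Commute (i : X) j := hcomm i i.2 j j.2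
  have hRinv (i : Y) : IsHeapHom (· * (i : X)⁻¹) := isHeapHom_mul_inv (hR i)
  have htwist (i j k : Y) (a b c : X) :=
    hB.braceSigma_twist (zi := i) (hR j) (hR k) (hM j k) a b c
  refine ⟨⟨?_, ?_⟩, ?_, ?_, htwist, ?_, ?_⟩
  · exact fun i j k a b c =>
      hB.braceTri_self_distrib (zi := i) (hR j) (hC j) (hRinv k) (hCinv k) a b c
  · exact fun i j => braceTri_bijective (i : X) j
  · exact fun i j => braceSigma_bijective (i : X) j
  · exact fun i j a b => (braceSigma_mul_braceTau (i : X) j a b).symm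
  · exact fun i j k a b c =>
      hB.braceTri_braceSigma (hR i) (hRinv j) (hR k) (hCinv j) (hM k i) (hM k j) a b c
  refine isYB_of_twist (fun i j a b => braceSigma_mul_braceTau (i : X) j a b) htwist ?_
  intro i j k x y z
  have hmp (i j : Y) (x y : X) :=
    hB.braceSigma_mul_braceSigma_braceTau (zj := j) (hRinv i) (hM k i) x y z
  calc _ = braceSigma ((i : X) * j) k z (y * x) := hmp i j x y
    _ = braceSigma ((j : X) * i) k z (braceSigma (i : X) j y x * braceTau (i : X) j x y) := by
      rw [hM i j, braceSigma_mul_braceTau]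
    _ = _ := (hmp j i _ _).symm

/-- for a skew left brace `(X, +, ∘)` and parameters
`Y ⊆ D(X) ∩ Z(X,+)` with pairwise `∘`-commuting elements: `(X, ▷_{ij})` is a
p-rack, each `σ^{ij}_a` is bijective, `a ∘ b = σ^{ij}_a(b) ∘ τ^{ij}_b(a)`, the
admissible-twist conditions hold, and consequently
`R^{ij}(b,a) = (σ^{ij}_a(b), τ^{ij}_b(a))` is a solution of the parametric
set-theoretic Yang–Baxter equation. -/
theorem skew_brace_solution {X : Type*} [AddGroup X]
    (mul : X → X → X) (inv : X → X)
    (hassoc : ∀ a b c : X, mul (mul a b) c = mul a (mul b c))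
    (hid : ∀ a : X, mul a 0 = a) (hid' : ∀ a : X, mul 0 a = a)
    (hinv : ∀ a : X, mul a (inv a) = 0) (hinv' : ∀ a : X, mul (inv a) a = 0)
    (hbrace : ∀ a b c : X, mul a (b + c) = mul a b - a + mul a c)
    (Y : Set X)
    (hD : ∀ z ∈ Y, ∀ a b : X, mul (a + b) z = mul a z - z + mul b z)
    (hZ : ∀ z ∈ Y, ∀ a : X, a + z = z + a)
    (hcomm : ∀ z ∈ Y, ∀ w ∈ Y, mul z w = mul w z) :
    (IsPShelf (fun (i j : Y) (a b : X) => tri mul inv i j a b)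
      ∧ ∀ (i j : Y) (a : X), Function.Bijective (tri mul inv i j a))
    ∧ (∀ (i j : Y) (a : X), Function.Bijective (sig mul inv i j a))
    ∧ (∀ (i j : Y) (a b : X), mul a b = mul (sig mul inv i j a b) (tau mul inv i j b a))
    ∧ (∀ (i j k : Y) (a b c : X),
        sig mul inv i k a (sig mul inv i j b c)
          = sig mul inv i j (sig mul inv j k a b)
              (sig mul inv i k (tau mul inv j k b a) c))
    ∧ (∀ (i j k : Y) (a b c : X),
        tri mul inv i j (sig mul inv i k c b) (sig mul inv j k c a)
          = sig mul inv j k c (tri mul inv i j b a))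
    ∧ IsYB (fun (i j : Y) (a b : X) => sig mul inv i j a b)
        (fun (i j : Y) (b a : X) => tau mul inv i j b a) :=
  skew_brace_solution_general mul inv hassoc hid' hinv' hbrace Y hD hZ hcomm

end Stmt14
end

section
/- Let (X, +_{ij}, ∘) be a p-brace with parameter group Y ≤ (X, ∘). Then, for all z_i, z_j ∈ Y, the structure (X, +_{ij}) is a quasigroup: for all a, b ∈ X there exist unique x, y ∈ X with x +_{ij} a = b and a +_{ij} y = b. In particular, for every z_i ∈ Y, (X, +_{z_i, 0}) is a quasigroup with left identity 0 and (X, +_{0, z_i}) is a quasigroup with right identity 0. -/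
/-!
Axiom (2) with `z_k = 0` gives `a +_{ij} b = b +_{ji} a`, so it suffices to show that every
translation `c ↦ a +_{ij} c` is bijective. For `z_j = 0` this follows from axiom (1) with
`z_i = z_j = 0`, which makes `+_{k,0}` associative over `+_{0,0}`: if `n +_{0,0} a = 0`, then
`c ↦ n +_{k,0} c` is inverse to `c ↦ a +_{k,0} c`. Axiom (1) with `(z_i, z_j) = (z, z̄)` or
`(z̄, z)` then relates the translations of `+_{k,0}` to those of `+_{k,z}`, transferring
injectivity and surjectivity.
-/

namespace Stmt15

/-- A p-brace structure: binary operations `+_{ij} = add i j` on the group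
`(X, ∘)` (written multiplicatively, identity `1` playing the role of `0`),
indexed by pairs of elements of the subgroup `Y`. -/
def IsPBrace {X : Type*} [Group X] {Y : Subgroup X} (add : Y → Y → X → X → X) : Prop :=
  (∀ (i j k : Y) (a b c : X),
      add k (i * j) (add i j a b) c = add (k * i) j a (add k i b c))
  ∧ (∀ (i j k : Y) (a b : X), add i (k * j) a b = add i (j * k) a b)
  ∧ (∀ (i j k : Y) (a b : X), add i (j * k) a b = add (j * k) i b a)
  ∧ (∀ (i : Y) (a : X), add i 1 1 a = a)
  ∧ (∀ (i j : Y) (a : X), ∃! x : X, add i j a x = 1)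
  ∧ (∀ (i j k : Y) (a b c : X),
      a * add k (i * j) b c = add k i (a * b) (a * add k j a⁻¹ c))

namespace IsPBrace

variable {X : Type*} [Group X] {Y : Subgroup X} {add : Y → Y → X → X → X}

theorem add_swap (h : IsPBrace add) (i j : Y) (a b : X) : add i j a b = add j i b a := by
  simpa using h.2.2.1 i j 1 a b

theorem one_add (h : IsPBrace add) (i : Y) (a : X) : add i 1 1 a = a :=
  h.2.2.2.1 i a

theorem add_one (h : IsPBrace add) (i : Y) (a : X) : add 1 i a 1 = a := by
  rw [h.add_swap, h.one_add]

theorem add_add_one_one (h : IsPBrace add) (k : Y) (a b c : X) :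
    add k 1 (add 1 1 a b) c = add k 1 a (add k 1 b c) := by
  simpa using h.1 1 1 k a b c

theorem bijective_add_one (h : IsPBrace add) (k : Y) (a : X) :
    Function.Bijective (add k 1 a) := by
  obtain ⟨n, hn, -⟩ := h.2.2.2.2.1 1 1 a
  have hn' : add 1 1 n a = 1 := by rw [h.add_swap]; exact hn
  refine Function.bijective_iff_has_inverse.2 ⟨add k 1 n, fun c => ?_, fun c => ?_⟩
  · rw [← h.add_add_one_one, hn', h.one_add]
  · rw [← h.add_add_one_one, hn, h.one_add]

theorem injective_add (h : IsPBrace add) (k j : Y) (a : X) : Function.Injective (add k j a) := by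
  intro c c' hcc'
  have key : ∀ d, add k 1 (add j j⁻¹ 1 a) d = add (k * j) j⁻¹ 1 (add k j a d) := fun d => by
    simpa using h.1 j j⁻¹ k 1 a d
  exact (h.bijective_add_one k _).1 (by rw [key, key, hcc'])

theorem surjective_add (h : IsPBrace add) (k j : Y) (a : X) :
    Function.Surjective (add k j a) := by
  intro d
  obtain ⟨c, rfl⟩ := (h.bijective_add_one (k * j) (add j⁻¹ j a 1)).2 d
  exact ⟨add (k * j) j⁻¹ 1 c, by simpa using (h.1 j⁻¹ j (k * j) a 1 c).symm⟩

theorem bijective_add (h : IsPBrace add) (k j : Y) (a : X) : Function.Bijective (add k j a) :=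
  ⟨h.injective_add k j a, h.surjective_add k j a⟩

end IsPBrace

/-- in a p-brace, every `(X, +_{ij})` is a quasigroup; in
particular `(X, +_{z_i, 0})` has left identity `0` and `(X, +_{0, z_i})` has
right identity `0` (the group identity of `(X, ∘)`). -/
theorem pBrace_quasigroup {X : Type*} [Group X] {Y : Subgroup X}
    (add : Y → Y → X → X → X) (h : IsPBrace add) :
    (∀ (i j : Y) (a b : X),
        (∃! x : X, add i j x a = b) ∧ (∃! y : X, add i j a y = b))
    ∧ (∀ (i : Y) (a : X), add i 1 1 a = a ∧ add 1 i a 1 = a) := by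
  refine ⟨fun i j a b => ⟨?_, (h.bijective_add i j a).existsUnique b⟩,
    fun i a => ⟨h.one_add i a, h.add_one i a⟩⟩
  simpa only [h.add_swap i j _ a] using (h.bijective_add j i a).existsUnique b

end Stmt15
end

section
/- Let (X, ∘) be a group with identity 0 and Y a subgroup of (X, ∘), and let η : Y × Y × X → Sym(X), (z_i, z_j, a) ↦ η^{ij}_a, be a reversible p-affine structure, i.e. each η^{ij}_a is a bijection of X and, for all a, b ∈ X and z_i, z_j, z_k ∈ Y: η^{z_i, z_j∘z_k}_{a∘b} = η^{z_i,z_j}_b ∘ η^{z_i,z_k}_a = η^{z_i, z_k∘z_j}_{a∘b}, and a ∘ η^{z_i,z_j}_a(b) = b ∘ η^{z_j,z_i}_b(a). Define a +_{ij} b := a ∘ η^{ij}_a(b). Then: (1) (X, +_{ij}, ∘) is a p-brace; and (2) the maps σ^{ij}_a := (η^{ij}_a)^{-1} and τ^{ij}_b(a) := σ^{ij}_a(b)^{-1} ∘ a ∘ b determine a reversible solution R^{ij}(b, a) = (σ^{ij}_a(b), τ^{ij}_b(a)) of the parametric set-theoretic Yang–Baxter equation, i.e. R is a solution and R_{21}^{ji}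 ∘ R_{12}^{ij} = id_{X×X}. -/
/-!
Two facts drive everything. The two p-affine axioms give `η^{ik}_b ∘ η^{ij}_a = η^{i,kj}_{a∘b}`
and allow the swap `kj ↦ jk`, so `η^{ik}_b ∘ η^{ij}_a = η^{ij}_d ∘ η^{ik}_c` whenever
`a ∘ b = c ∘ d`. Reversibility rewrites `τ^{ij}_b(a) = η^{ji}_{σ^{ij}_a(b)}(a)`, and always
`σ^{ij}_a(b) ∘ τ^{ij}_b(a) = a ∘ b`. On `(x, y, z)` the first component of the Yang–Baxter
equation is the first fact applied to `σ^{jk}_z(y) ∘ τ^{jk}_y(z) = z ∘ y`, the second is the first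
fact again with the indices permuted, and the third follows from the second, since both sides
multiply out to `z ∘ y ∘ x`. The p-brace axioms are direct rewrites with the same identities.
-/

namespace Stmt16

variable {X P : Type*}

/-- `R_{12}` acting on the first two factors of `X × X × X`, where
`R^{ij}(b,a) = (σ^{ij}_a(b), τ^{ij}_b(a))`. -/
def R12 (σ τ : P → P → X → X → X) (i j : P) : X × X × X → X × X × X :=
  fun p => (σ i j p.2.1 p.1, τ i j p.1 p.2.1, p.2.2)

def R13 (σ τ : P → P → X → X → X) (i j : P) : X × X × X → X × X × X :=
  fun p => (σ i j p.2.2 p.1, p.2.1, τ i j p.1 p.2.2)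

def R23 (σ τ : P → P → X → X → X) (i j : P) : X × X × X → X × X × X :=
  fun p => (p.1, σ i j p.2.2 p.2.1, τ i j p.2.1 p.2.2)

/-- The parametric set-theoretic Yang–Baxter equation. -/
def IsYB (σ τ : P → P → X → X → X) : Prop :=
  ∀ i j k : P,
    R12 σ τ i j ∘ R13 σ τ i k ∘ R23 σ τ j k
      = R23 σ τ j k ∘ R13 σ τ i k ∘ R12 σ τ i j

/-- The map `R^{ij} : X × X → X × X`, `R^{ij}(b, a) = (σ^{ij}_a(b), τ^{ij}_b(a))`. -/
def Rm (σ τ : P → P → X → X → X) (i j : P) : X × X → X × X :=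
  fun p => (σ i j p.2 p.1, τ i j p.1 p.2)

/-- A p-brace structure: binary operations `+_{ij} = add i j` on the group
`(X, ∘)` (written multiplicatively, identity `1` playing the role of `0`),
indexed by pairs of elements of the subgroup `Y`. -/
def IsPBrace {X : Type*} [Group X] {Y : Subgroup X} (add : Y → Y → X → X → X) : Prop :=
  (∀ (i j k : Y) (a b c : X),
      add k (i * j) (add i j a b) c = add (k * i) j a (add k i b c))
  ∧ (∀ (i j k : Y) (a b : X), add i (k * j) a b = add i (j * k) a b)
  ∧ (∀ (i j k : Y) (a b : X), add i (j * k) a b = add (j * k) i b a)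
  ∧ (∀ (i : Y) (a : X), add i 1 1 a = a)
  ∧ (∀ (i j : Y) (a : X), ∃! x : X, add i j a x = 1)
  ∧ (∀ (i j k : Y) (a b c : X),
      a * add k (i * j) b c = add k i (a * b) (a * add k j a⁻¹ c))

section PAffine

variable {M X : Type*} [Group X]

structure IsPAffine [Mul M] (η : M → M → X → X ≃ X) : Prop where
  mul_apply : ∀ (i j k : M) (a b x : X), η i (j * k) (a * b) x = η i j b (η i k a x)
  comm_index : ∀ (i j k : M) (a b x : X), η i (j * k) (a * b) x = η i (k * j) (a * b) x

def IsReversible (η : M → M → X → X ≃ X) : Prop :=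
  ∀ (i j : M) (a b : X), a * η i j a b = b * η j i b a

variable (η : M → M → X → X ≃ X)

def pAdd (i j : M) (a b : X) : X := a * η i j a b

def pSigma (i j : M) (a b : X) : X := (η i j a).symm b

def pTau (i j : M) (b a : X) : X := (pSigma η i j a b)⁻¹ * a * b

variable {η}

theorem pSigma_mul_pTau (i j : M) (a b : X) : pSigma η i j a b * pTau η i j b a = a * b := by
  simp only [pTau]
  group

theorem existsUnique_pAdd_eq_one (i j : M) (a : X) : ∃! x, pAdd η i j a x = 1 := by
  refine ⟨pSigma η i j a a⁻¹, by simp [pAdd, pSigma], fun y (hy : a * η i j a y = 1) => ?_⟩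
  rw [pSigma, inv_eq_of_mul_eq_one_right hy, Equiv.symm_apply_apply]

namespace IsReversible

theorem pAdd_comm (hη : IsReversible η) (i j : M) (a b : X) : pAdd η i j a b = pAdd η j i b a :=
  hη i j a b

theorem eta_swap_eq_of_eq (hη : IsReversible η) {i j : M} {a s b : X} (h : η i j a s = b) :
    η j i s a = s⁻¹ * a * b := by
  rw [← h, mul_assoc, hη]
  group

theorem pTau_eq_eta (hη : IsReversible η) (i j : M) (a b : X) :
    pTau η i j b a = η j i (pSigma η i j a b) a :=
  (hη.eta_swap_eq_of_eq ((η i j a).apply_symm_apply b)).symm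

theorem pSigma_pTau_swap (hη : IsReversible η) (i j : M) (a b : X) :
    pSigma η j i (pSigma η i j a b) (pTau η i j b a) = a := by
  rw [hη.pTau_eq_eta, pSigma, Equiv.symm_apply_apply]

theorem pTau_pTau_swap (hη : IsReversible η) (i j : M) (a b : X) :
    pTau η j i (pTau η i j b a) (pSigma η i j a b) = b := by
  rw [pTau, hη.pSigma_pTau_swap]
  simp only [pTau]
  group

theorem Rm_swap_comp_Rm (hη : IsReversible η) (i j : M) :
    (Prod.swap ∘ Rm (pSigma η) (pTau η) j i ∘ Prod.swap) ∘ Rm (pSigma η) (pTau η) i j = id := by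
  funext ⟨b, a⟩
  simp only [Rm, Function.comp_apply, Prod.swap_prod_mk, id_eq, hη.pSigma_pTau_swap,
    hη.pTau_pTau_swap]

end IsReversible

namespace IsPAffine

theorem one_pAdd [MulOneClass M] (hη : IsPAffine η) (i : M) (a : X) : pAdd η i 1 1 a = a := by
  have h := hη.mul_apply i 1 1 1 1 a
  simp only [mul_one] at h
  rw [pAdd, one_mul, ← (η i 1 1).injective h]

variable [Mul M]

theorem comp_eq_of_mul_eq (hη : IsPAffine η) {i j k : M} {a b c d : X} (h : a * b = c * d)
    (w : X) : η i k b (η i j a w) = η i j d (η i k c w) := by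
  rw [← hη.mul_apply, ← hη.mul_apply, h, hη.comm_index]

theorem pSigma_comp_eq_of_mul_eq (hη : IsPAffine η) {i j k : M} {a b c d : X}
    (h : a * b = c * d) (w : X) :
    pSigma η i j a (pSigma η i k b w) = pSigma η i k c (pSigma η i j d w) := by
  simp only [pSigma]
  rw [Equiv.eq_symm_apply, Equiv.eq_symm_apply, ← hη.comp_eq_of_mul_eq h,
    Equiv.apply_symm_apply, Equiv.apply_symm_apply]

theorem pAdd_comm_index (hη : IsPAffine η) (i j k : M) (a b : X) :
    pAdd η i (k * j) a b = pAdd η i (j * k) a b := by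
  simpa only [pAdd, mul_one] using congrArg (a * ·) (hη.comm_index i k j a 1 b)

theorem mul_pAdd (hη : IsPAffine η) (i j k : M) (a b c : X) :
    a * pAdd η k (i * j) b c = pAdd η k i (a * b) (a * pAdd η k j a⁻¹ c) := by
  simp only [pAdd]
  rw [mul_inv_cancel_left, ← hη.mul_apply, inv_mul_cancel_left, mul_assoc]

theorem pAdd_assoc (hη : IsPAffine η) (hrev : IsReversible η) (i j k : M) (a b c : X) :
    pAdd η k (i * j) (pAdd η i j a b) c = pAdd η (k * i) j a (pAdd η k i b c) := by
  simp only [pAdd]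
  rw [hrev i j a b, ← hη.comm_index, hη.mul_apply, mul_assoc, hrev k j, ← hη.mul_apply,
    ← mul_assoc, ← hrev]

theorem isYB (hη : IsPAffine η) (hrev : IsReversible η) : IsYB (pSigma η) (pTau η) := by
  intro i j k
  funext ⟨x, y, z⟩
  simp only [R12, R13, R23, Function.comp_apply, Prod.mk.injEq]
  set S := pSigma η j k z y with hS
  set T := pTau η j k y z
  set U := pSigma η i j y x
  set V := pTau η i j x y with hV
  set A := pSigma η i k T x
  set B := pSigma η i k z U
  set W := pTau η i k U z
  have hST : S * T = z * y := pSigma_mul_pTau j k z y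
  have hUV : U * V = y * x := pSigma_mul_pTau i j y x
  have hBW : B * W = z * U := pSigma_mul_pTau i k z U
  have hAT : A * pTau η i k x T = T * x := pSigma_mul_pTau i k T x
  have first : pSigma η i j S A = B := hη.pSigma_comp_eq_of_mul_eq hST x
  have hBC : B * pTau η i j A S = S * A := first ▸ pSigma_mul_pTau i j S A
  have second : pTau η i j A S = pSigma η j k W V := by
    rw [hrev.pTau_eq_eta, first, pSigma, Equiv.eq_symm_apply, hη.comp_eq_of_mul_eq hBW,
      hS, pSigma, Equiv.apply_symm_apply, hV, hrev.pTau_eq_eta]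
  have hCW : pTau η i j A S * pTau η j k V W = W * V := second ▸ pSigma_mul_pTau j k W V
  refine ⟨first, second, mul_left_cancel (a := S * A) ?_⟩
  calc S * A * pTau η i k x T = z * (U * V) := by
        rw [mul_assoc, hAT, ← mul_assoc, hST, hUV, mul_assoc]
    _ = S * A * pTau η j k V W := by
        rw [← hBC, mul_assoc, hCW, ← mul_assoc B, hBW, mul_assoc]

end IsPAffine

end PAffine

theorem isPBrace_pAdd {X : Type*} [Group X] {Y : Subgroup X} {η : Y → Y → X → X ≃ X}
    (hη : IsPAffine η) (hrev : IsReversible η) : IsPBrace (pAdd η) :=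
  ⟨hη.pAdd_assoc hrev, hη.pAdd_comm_index, fun i j k => hrev.pAdd_comm i (j * k), hη.one_pAdd,
    existsUnique_pAdd_eq_one, hη.mul_pAdd⟩

/-- a reversible p-affine structure `η` on the group `(X, ∘)`
yields a p-brace via `a +_{ij} b := a ∘ η^{ij}_a(b)`, and the maps
`σ^{ij}_a := (η^{ij}_a)⁻¹`, `τ^{ij}_b(a) := σ^{ij}_a(b)⁻¹ ∘ a ∘ b` determine a
reversible solution of the parametric set-theoretic Yang–Baxter equation. -/
theorem reversible_pAffine_to_pBrace {X : Type*} [Group X] {Y : Subgroup X}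
    (η : Y → Y → X → X ≃ X)
    (hA : ∀ (i j k : Y) (a b x : X), η i (j * k) (a * b) x = η i j b (η i k a x))
    (hA' : ∀ (i j k : Y) (a b x : X), η i (j * k) (a * b) x = η i (k * j) (a * b) x)
    (hrev : ∀ (i j : Y) (a b : X), a * η i j a b = b * η j i b a) :
    IsPBrace (fun (i j : Y) (a b : X) => a * η i j a b)
    ∧ IsYB (fun (i j : Y) (a b : X) => (η i j a).symm b)
        (fun (i j : Y) (b a : X) => ((η i j a).symm b)⁻¹ * a * b)
    ∧ ∀ i j : Y,
        (Prod.swap ∘ Rm (fun (i j : Y) (a b : X) => (η i j a).symm b)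
              (fun (i j : Y) (b a : X) => ((η i j a).symm b)⁻¹ * a * b) j i ∘ Prod.swap)
          ∘ Rm (fun (i j : Y) (a b : X) => (η i j a).symm b)
              (fun (i j : Y) (b a : X) => ((η i j a).symm b)⁻¹ * a * b) i j
        = id := by
  have hη : IsPAffine η := ⟨hA, hA'⟩
  exact ⟨isPBrace_pAdd hη hrev, hη.isYB hrev, IsReversible.Rm_swap_comp_Rm hrev⟩

end Stmt16
end

section
/- Let (X, ∘) be a group with identity 0 and Y a subgroup of (X, ∘), and let η : Y × Y × X → Sym(X), (z_i, z_j, a) ↦ η^{ij}_a, be a p-affine structure, i.e. each η^{ij}_a is a bijection of X and, for all a, b, c ∈ X and z_i, z_j, z_k ∈ Y: (A1) η^{z_i, z_j∘z_k}_{a∘b} = η^{z_i,z_j}_b ∘ η^{z_i,z_k}_a = η^{z_i, z_k∘z_j}_{a∘b}; (A2) η^{0, z_j}_a(0) = 0; (A3) η^{z_i∘z_j, z_k}_a = η^{z_j∘z_i, z_k}_a; (A4) η^{z_k∘z_j, z_i}_a(b ∘ η^{z_k,z_j}_b(c)) = η^{z_j,z_i}_a(b) ∘ η^{z_k,z_i}_{η^{z_j,z_i}_a(b)}(η^{z_k,z_j}_a(c)).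 Define a +_{ij} b := a ∘ η^{ij}_a(b). Then (X, +_{ij}, ∘) is a skew p-brace. -/
/-!
The pairs `(a, m) ∈ X × Y` form a group under `(a, m) * (b, n) = (a +_{nm} b, m ∘ n)`, with unit
`(0, 0)`: associativity is (A1), (A3) and (A4) together, and `((η^{m⁻¹ m}_a)⁻¹ (a⁻¹), m⁻¹)` is a
right inverse of `(a, m)`. The brace associativity law is the first component of the associativity
of this group, and the left equation `y +_{ij} a = 0` becomes `(y, j) * (a, i) = (0, j ∘ i)`, which
has exactly one solution. The remaining brace axioms are direct instances of (A1) and (A2).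
-/

namespace Stmt18

/-- A skew p-brace structure: binary operations `+_{ij} = add i j` on the group
`(X, ∘)` (written multiplicatively, identity `1` playing the role of `0`),
indexed by pairs of elements of the subgroup `Y`. -/
def IsSkewPBrace {X : Type*} [Group X] {Y : Subgroup X} (add : Y → Y → X → X → X) : Prop :=
  (∀ (i j k : Y) (a b c : X),
      add k (i * j) (add i j a b) c = add (k * i) j a (add k i b c))
  ∧ (∀ (i j k : Y) (a b : X), add i (j * k) a b = add i (k * j) a b)
  ∧ (∀ (i : Y) (a : X), add 1 i a 1 = a)
  ∧ (∀ (i : Y) (a : X), add i 1 1 a = a)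
  ∧ (∀ (i j : Y) (a : X), (∃! x : X, add i j a x = 1) ∧ (∃! y : X, add i j y a = 1))
  ∧ (∀ (i j k : Y) (a b c : X),
      a * add k (i * j) b c = add k i (a * b) (a * add k j a⁻¹ c))

section PAffine

variable {X : Type*} [Group X] {Y : Subgroup X} (η : Y → Y → X → X ≃ X)

theorem eta_one_one_apply
    (hA1 : ∀ (i j k : Y) (a b x : X), η i (j * k) (a * b) x = η i j b (η i k a x))
    (i : Y) (x : X) : η i 1 1 x = x :=
  (η i 1 1).injective <| by simpa using (hA1 i 1 1 1 1 x).symm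

theorem eta_mul_comm_apply
    (hA1' : ∀ (i j k : Y) (a b x : X), η i (j * k) (a * b) x = η i (k * j) (a * b) x)
    (i j k : Y) (a x : X) : η i (j * k) a x = η i (k * j) a x := by
  simpa using hA1' i j k a 1 x

def PAffinePair (_η : Y → Y → X → X ≃ X) : Type _ := X × Y

namespace PAffinePair

instance : Mul (PAffinePair η) := ⟨fun p q => (p.1 * η q.2 p.2 p.1 q.1, p.2 * q.2)⟩

instance : One (PAffinePair η) := ⟨((1 : X), (1 : Y))⟩

instance : Inv (PAffinePair η) := ⟨fun p => ((η p.2⁻¹ p.2 p.1).symm p.1⁻¹, p.2⁻¹)⟩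

theorem mul_assoc
    (hA1 : ∀ (i j k : Y) (a b x : X), η i (j * k) (a * b) x = η i j b (η i k a x))
    (hA3 : ∀ (i j k : Y) (a x : X), η (i * j) k a x = η (j * i) k a x)
    (hA4 : ∀ (i j k : Y) (a b c : X),
        η (k * j) i a (b * η k j b c) = η j i a b * η k i (η j i a b) (η k j a c))
    (p q r : PAffinePair η) : p * q * r = p * (q * r) := by
  refine Prod.ext ?_ (_root_.mul_assoc p.2 q.2 r.2)
  show p.1 * η q.2 p.2 p.1 q.1 * η r.2 (p.2 * q.2) (p.1 * η q.2 p.2 p.1 q.1) r.1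
    = p.1 * η (q.2 * r.2) p.2 p.1 (q.1 * η r.2 q.2 q.1 r.1)
  rw [hA3, hA4, hA1, _root_.mul_assoc]

theorem mul_one (hA2 : ∀ (j : Y) (a : X), η 1 j a 1 = 1) (p : PAffinePair η) : p * 1 = p :=
  Prod.ext (show p.1 * η 1 p.2 p.1 1 = p.1 by rw [hA2, _root_.mul_one]) (_root_.mul_one p.2)

theorem mul_inv_cancel (p : PAffinePair η) : p * p⁻¹ = 1 :=
  Prod.ext (show p.1 * η p.2⁻¹ p.2 p.1 ((η p.2⁻¹ p.2 p.1).symm p.1⁻¹) = 1 by simp)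
    (_root_.mul_inv_cancel p.2)

abbrev group
    (hA1 : ∀ (i j k : Y) (a b x : X), η i (j * k) (a * b) x = η i j b (η i k a x))
    (hA2 : ∀ (j : Y) (a : X), η 1 j a 1 = 1)
    (hA3 : ∀ (i j k : Y) (a x : X), η (i * j) k a x = η (j * i) k a x)
    (hA4 : ∀ (i j k : Y) (a b c : X),
        η (k * j) i a (b * η k j b c) = η j i a b * η k i (η j i a b) (η k j a c)) :
    Group (PAffinePair η) :=
  Group.ofRightAxioms (mul_assoc η hA1 hA3 hA4) (mul_one η hA2) (mul_inv_cancel η)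

end PAffinePair

theorem existsUnique_mul_eta_eq_one_left
    (hA1 : ∀ (i j k : Y) (a b x : X), η i (j * k) (a * b) x = η i j b (η i k a x))
    (hA2 : ∀ (j : Y) (a : X), η 1 j a 1 = 1)
    (hA3 : ∀ (i j k : Y) (a x : X), η (i * j) k a x = η (j * i) k a x)
    (hA4 : ∀ (i j k : Y) (a b c : X),
        η (k * j) i a (b * η k j b c) = η j i a b * η k i (η j i a b) (η k j a c))
    (i j : Y) (a : X) : ∃! y : X, y * η i j y a = 1 := by
  let _ := PAffinePair.group η hA1 hA2 hA3 hA4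
  let pair : X → Y → PAffinePair η := Prod.mk
  have solves_iff : ∀ y, y * η i j y a = 1 ↔ pair y j * pair a i = pair 1 (j * i) := fun y =>
    ⟨fun h => Prod.ext (α := X) (β := Y) h rfl, congrArg Prod.fst⟩
  let s := pair 1 (j * i) * (pair a i)⁻¹
  have pair_s : pair s.1 j = s := Prod.ext rfl (show j = j * i * i⁻¹ by group)
  refine ⟨s.1, (solves_iff _).2 ?_, fun y hy => ?_⟩
  · rw [pair_s, inv_mul_cancel_right]
  · exact congrArg Prod.fst (eq_mul_inv_of_mul_eq (G := PAffinePair η) ((solves_iff y).1 hy))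

end PAffine

/-- a p-affine structure `η` on the group `(X, ∘)` (axioms
(A1)–(A4)) yields a skew p-brace via `a +_{ij} b := a ∘ η^{ij}_a(b)`. -/
theorem pAffine_to_skewPBrace {X : Type*} [Group X] {Y : Subgroup X}
    (η : Y → Y → X → X ≃ X)
    (hA1 : ∀ (i j k : Y) (a b x : X), η i (j * k) (a * b) x = η i j b (η i k a x))
    (hA1' : ∀ (i j k : Y) (a b x : X), η i (j * k) (a * b) x = η i (k * j) (a * b) x)
    (hA2 : ∀ (j : Y) (a : X), η 1 j a 1 = 1)
    (hA3 : ∀ (i j k : Y) (a x : X), η (i * j) k a x = η (j * i) k a x)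
    (hA4 : ∀ (i j k : Y) (a b c : X),
        η (k * j) i a (b * η k j b c)
          = η j i a b * η k i (η j i a b) (η k j a c)) :
    IsSkewPBrace (fun (i j : Y) (a b : X) => a * η i j a b) := by
  refine ⟨fun i j k a b c => ?_, fun i j k a b => ?_, fun i a => ?_, fun i a => ?_,
    fun i j a => ⟨?_, existsUnique_mul_eta_eq_one_left η hA1 hA2 hA3 hA4 i j a⟩,
    fun i j k a b c => ?_⟩ <;> beta_reduce
  · rw [eta_mul_comm_apply η hA1' k i j, hA3 k i j]
    exact congrArg Prod.fst <|
      PAffinePair.mul_assoc η hA1 hA3 hA4 ((a, j) : X × Y) ((b, i) : X × Y) ((c, k) : X × Y)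
  · rw [eta_mul_comm_apply η hA1']
  · rw [hA2, mul_one]
  · rw [eta_one_one_apply η hA1, one_mul]
  · refine ⟨(η i j a).symm a⁻¹, by simp, fun x hx => ?_⟩
    exact (η i j a).eq_symm_apply.mpr (eq_inv_of_mul_eq_one_right hx)
  · have h := hA1 k i j a⁻¹ (a * b) c
    rw [inv_mul_cancel_left] at h
    rw [h, mul_inv_cancel_left, mul_assoc]

end Stmt18
end

section
/- Let (X, ∘) be a group with identity 0 and Y a subgroup of (X, ∘), and let η : Y × Y × X → Sym(X), (z_i, z_j, a) ↦ η^{ij}_a, be a p-affine structure, i.e. each η^{ij}_a is a bijection of X and, for all a, b, c ∈ X and z_i, z_j, z_k ∈ Y: (A1) η^{z_i, z_j∘z_k}_{a∘b} = η^{z_i,z_j}_b ∘ η^{z_i,z_k}_a = η^{z_i, z_k∘z_j}_{a∘b}; (A2) η^{0, z_j}_a(0) = 0; (A3) η^{z_i∘z_j, z_k}_a = η^{z_j∘z_i, z_k}_a; (A4) η^{z_k∘z_j, z_i}_a(b ∘ η^{z_k,z_j}_b(c)) = η^{z_j,z_i}_a(b) ∘ η^{z_k,z_i}_{η^{z_j,z_i}_a(b)}(η^{z_k,z_j}_a(c)).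 Then the maps σ^{ij}_a := (η^{ij}_a)^{-1} and τ^{ij}_b(a) := σ^{ij}_a(b)^{-1} ∘ a ∘ b determine a solution R^{ij}(b, a) = (σ^{ij}_a(b), τ^{ij}_b(a)) of the parametric set-theoretic Yang–Baxter equation on X. -/
namespace Stmt19

variable {X P : Type*}

/-- `R_{12}` acting on the first two factors of `X × X × X`, where
`R^{ij}(b,a) = (σ^{ij}_a(b), τ^{ij}_b(a))`. -/
def R12 (σ τ : P → P → X → X → X) (i j : P) : X × X × X → X × X × X :=
  fun p => (σ i j p.2.1 p.1, τ i j p.1 p.2.1, p.2.2)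

def R13 (σ τ : P → P → X → X → X) (i j : P) : X × X × X → X × X × X :=
  fun p => (σ i j p.2.2 p.1, p.2.1, τ i j p.1 p.2.2)

def R23 (σ τ : P → P → X → X → X) (i j : P) : X × X × X → X × X × X :=
  fun p => (p.1, σ i j p.2.2 p.2.1, τ i j p.2.1 p.2.2)

/-- The parametric set-theoretic Yang–Baxter equation. -/
def IsYB (σ τ : P → P → X → X → X) : Prop :=
  ∀ i j k : P,
    R12 σ τ i j ∘ R13 σ τ i k ∘ R23 σ τ j k
      = R23 σ τ j k ∘ R13 σ τ i k ∘ R12 σ τ i j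

/-! For `τ^{ij}_b(a) = σ^{ij}_a(b)⁻¹ a b` we have `σ^{ij}_a(b) τ^{ij}_b(a) = a b`, so both sides of
the Yang–Baxter equation send `(c, b, a)` to triples with product `a b c`. Hence it suffices that
the first components and the products of the first two components agree. The first components
agree because (A1) makes `σ^{ij}_x ∘ σ^{ik}_y` and `σ^{ik}_x ∘ σ^{ij}_y` depend only on `x y`. For
the products, (A4) shows that `η^{ij,k}_a` maps the product of the first two components of either
side to `b c`; the two sides are the same expression with `i` and `j` exchanged, which (A3)
absorbs. -/

section Reduction

variable [Group X]

def tauOfSigma (σ : P → P → X → X → X) (i j : P) (b a : X) : X :=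
  (σ i j a b)⁻¹ * a * b

/-- The product of the first two components of `(R_{12} ∘ R_{13} ∘ R_{23})(c, b, a)`. -/
def twistedMul (σ : P → P → X → X → X) (i j k : P) (a b c : X) : X :=
  σ j k a b * σ i k (tauOfSigma σ j k b a) c

theorem eq_of_fst_eq_of_mul_eq {x y : X × X × X} (h₁ : x.1 = y.1)
    (h₁₂ : x.1 * x.2.1 = y.1 * y.2.1) (h₁₂₃ : x.1 * x.2.1 * x.2.2 = y.1 * y.2.1 * y.2.2) :
    x = y := by
  obtain ⟨x₁, x₂, x₃⟩ := x
  obtain ⟨y₁, y₂, y₃⟩ := y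
  simp only [Prod.mk.injEq] at *
  rw [h₁₂] at h₁₂₃
  rw [h₁] at h₁₂
  exact ⟨h₁, mul_left_cancel h₁₂, mul_left_cancel h₁₂₃⟩

theorem isYB_tauOfSigma (σ : P → P → X → X → X)
    (h_fst : ∀ i j k a b c,
      σ i j (σ j k a b) (σ i k (tauOfSigma σ j k b a) c) = σ i k a (σ i j b c))
    (h_mul : ∀ i j k a b c,
      twistedMul σ i j k a b c = twistedMul σ j i k a (σ i j b c) (tauOfSigma σ i j c b)) :
    IsYB σ (tauOfSigma σ) := by
  intro i j k
  funext ⟨c, b, a⟩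
  simp only [R12, R13, R23, Function.comp_apply]
  refine eq_of_fst_eq_of_mul_eq (h_fst i j k a b c) ?_ ?_
  · simpa only [tauOfSigma, twistedMul, mul_inv_cancel_left, mul_assoc] using h_mul i j k a b c
  · simp only [tauOfSigma]
    group

end Reduction

section PAffine

variable [Group X] [Mul P] (η : P → P → X → X ≃ X)

theorem symm_apply_symm_apply_eq
    (hA1 : ∀ (i j k : P) (a b x : X), η i (j * k) (a * b) x = η i j b (η i k a x))
    (i j k : P) (a b x : X) :
    (η i k a).symm ((η i j b).symm x) = (η i (j * k) (a * b)).symm x := by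
  rw [Equiv.symm_apply_eq, Equiv.symm_apply_eq, ← hA1, Equiv.apply_symm_apply]

theorem symm_apply_symm_apply_eq'
    (hA1 : ∀ (i j k : P) (a b x : X), η i (j * k) (a * b) x = η i j b (η i k a x))
    (hA1' : ∀ (i j k : P) (a b x : X), η i (j * k) (a * b) x = η i (k * j) (a * b) x)
    (i j k : P) (a b x : X) :
    (η i j a).symm ((η i k b).symm x) = (η i (j * k) (a * b)).symm x := by
  rw [symm_apply_symm_apply_eq η hA1, Equiv.symm_apply_eq, ← hA1', Equiv.apply_symm_apply]

theorem symm_apply_symm_apply_comm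
    (hA1 : ∀ (i j k : P) (a b x : X), η i (j * k) (a * b) x = η i j b (η i k a x))
    (hA1' : ∀ (i j k : P) (a b x : X), η i (j * k) (a * b) x = η i (k * j) (a * b) x)
    (i j k : P) (a b c : X) :
    (η i j ((η j k a).symm b)).symm ((η i k (((η j k a).symm b)⁻¹ * a * b)).symm c)
      = (η i k a).symm ((η i j b).symm c) := by
  rw [symm_apply_symm_apply_eq' η hA1 hA1', symm_apply_symm_apply_eq η hA1,
    mul_assoc, mul_inv_cancel_left]

theorem apply_twistedMul
    (hA1 : ∀ (i j k : P) (a b x : X), η i (j * k) (a * b) x = η i j b (η i k a x))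
    (hA1' : ∀ (i j k : P) (a b x : X), η i (j * k) (a * b) x = η i (k * j) (a * b) x)
    (hA4 : ∀ (i j k : P) (a b c : X),
        η (k * j) i a (b * η k j b c) = η j i a b * η k i (η j i a b) (η k j a c))
    (i j k : P) (a b c : X) :
    η (i * j) k a (twistedMul (fun i j a b => (η i j a).symm b) i j k a b c) = b * c := by
  set y := (η j k a).symm b
  set v := (η i (j * k) (a * b)).symm c
  have hx : (η i k (tauOfSigma (fun i j a b => (η i j a).symm b) j k b a)).symm c = η i j y v := by
    rw [← Equiv.symm_apply_eq, tauOfSigma, symm_apply_symm_apply_eq' η hA1 hA1', mul_assoc,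
      mul_inv_cancel_left]
  rw [twistedMul, hx, hA4, Equiv.apply_symm_apply, ← hA1, ← hA1', Equiv.apply_symm_apply]

theorem twistedMul_comm
    (hA1 : ∀ (i j k : P) (a b x : X), η i (j * k) (a * b) x = η i j b (η i k a x))
    (hA1' : ∀ (i j k : P) (a b x : X), η i (j * k) (a * b) x = η i (k * j) (a * b) x)
    (hA3 : ∀ (i j k : P) (a x : X), η (i * j) k a x = η (j * i) k a x)
    (hA4 : ∀ (i j k : P) (a b c : X),
        η (k * j) i a (b * η k j b c) = η j i a b * η k i (η j i a b) (η k j a c))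
    (i j k : P) (a b c : X) :
    let σ : P → P → X → X → X := fun i j a b => (η i j a).symm b
    twistedMul σ i j k a b c = twistedMul σ j i k a (σ i j b c) (tauOfSigma σ i j c b) := by
  intro σ
  apply (η (i * j) k a).injective
  rw [apply_twistedMul η hA1 hA1' hA4, hA3, apply_twistedMul η hA1 hA1' hA4]
  simp only [σ, tauOfSigma, mul_assoc, mul_inv_cancel_left]

end PAffine

theorem pAffine_to_solution_general {X : Type*} [Group X] {Y : Subgroup X}
    (η : Y → Y → X → X ≃ X)
    (hA1 : ∀ (i j k : Y) (a b x : X), η i (j * k) (a * b) x = η i j b (η i k a x))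
    (hA1' : ∀ (i j k : Y) (a b x : X), η i (j * k) (a * b) x = η i (k * j) (a * b) x)
    (hA3 : ∀ (i j k : Y) (a x : X), η (i * j) k a x = η (j * i) k a x)
    (hA4 : ∀ (i j k : Y) (a b c : X),
        η (k * j) i a (b * η k j b c)
          = η j i a b * η k i (η j i a b) (η k j a c)) :
    IsYB (fun (i j : Y) (a b : X) => (η i j a).symm b)
        (fun (i j : Y) (b a : X) => ((η i j a).symm b)⁻¹ * a * b) :=
  isYB_tauOfSigma _ (symm_apply_symm_apply_comm η hA1 hA1')
    (twistedMul_comm η hA1 hA1' hA3 hA4)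

/-- a p-affine structure `η` on the group `(X, ∘)` (axioms
(A1)–(A4)) determines, via `σ^{ij}_a := (η^{ij}_a)⁻¹` and
`τ^{ij}_b(a) := σ^{ij}_a(b)⁻¹ ∘ a ∘ b`, a solution
`R^{ij}(b,a) = (σ^{ij}_a(b), τ^{ij}_b(a))` of the parametric set-theoretic
Yang–Baxter equation. -/
theorem pAffine_to_solution {X : Type*} [Group X] {Y : Subgroup X}
    (η : Y → Y → X → X ≃ X)
    (hA1 : ∀ (i j k : Y) (a b x : X), η i (j * k) (a * b) x = η i j b (η i k a x))
    (hA1' : ∀ (i j k : Y) (a b x : X), η i (j * k) (a * b) x = η i (k * j) (a * b) x)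
    (hA2 : ∀ (j : Y) (a : X), η 1 j a 1 = 1)
    (hA3 : ∀ (i j k : Y) (a x : X), η (i * j) k a x = η (j * i) k a x)
    (hA4 : ∀ (i j k : Y) (a b c : X),
        η (k * j) i a (b * η k j b c)
          = η j i a b * η k i (η j i a b) (η k j a c)) :
    IsYB (fun (i j : Y) (a b : X) => (η i j a).symm b)
        (fun (i j : Y) (b a : X) => ((η i j a).symm b)⁻¹ * a * b) :=
  pAffine_to_solution_general η hA1 hA1' hA3 hA4

end Stmt19
end
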